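/- arXiv:1904.08651 — 6 statements merged into one kernel-verified Lean document; each statement's English description precedes it below -/
import Mathlib

section
/- Let A and B be symmetric matrices of order 2m with zero diagonal over a commutative ring. Then Hf(A + B) = Σ_{k=0}^{m} Σ_{α ∈ Q_{2k,2m}} Hf(A[α]) · Hf(B(α)), where by convention Hf of the empty (0×0) matrix equals 1 (so the k=0 term contributes Hf(B) and the k=m term contributes Hf(A)). -/
/-!
Expanding `∏ (A + B)` over the pairs `{i, σ i}` of a perfect matching `σ` amounts to choosing the
pairs that are weighted by `A`; their union is a `σ`-invariant set `α`, and every `σ`-invariant set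
arises from exactly one such choice. A perfect matching leaving `α` invariant is the same as a pair
of perfect matchings of `α` and of its complement, so exchanging the sums over `σ` and `α` gives
`Hf(A + B) = ∑ α, Hf(A[α]) * Hf(B(α))` over all subsets `α`. Sets of odd size admit no perfect
matching, which leaves the terms with `#α = 2k`.
-/

/-- The hafnian of a matrix over a linearly ordered finite index type:
the sum over all fixed-point-free involutions `σ` of the product of the
entries `A i (σ i)`, taken over one representative `i < σ i` of each orbit.
(For the empty index type this is `1`.) -/
def hafnian {ι : Type*} [Fintype ι] [LinearOrder ι] {R : Type*} [CommSemiring R]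
    (A : Matrix ι ι R) : R :=
  ∑ σ ∈ Finset.univ.filter
      (fun σ : Equiv.Perm ι => σ * σ = 1 ∧ ∀ i, σ i ≠ i),
    ∏ i ∈ Finset.univ.filter (fun i => i < σ i), A i (σ i)

open Finset Equiv

namespace Equiv.Perm

variable {ι : Type*}

def IsFixedPointFreeInvolution (σ : Perm ι) : Prop :=
  σ * σ = 1 ∧ ∀ i, σ i ≠ i

instance [Fintype ι] [DecidableEq ι] : DecidablePred (IsFixedPointFreeInvolution (ι := ι)) :=
  fun _ => inferInstanceAs (Decidable (_ ∧ _))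

namespace IsFixedPointFreeInvolution

variable {σ : Perm ι}

theorem involutive (hσ : σ.IsFixedPointFreeInvolution) : Function.Involutive σ :=
  fun i => congr($(hσ.1) i)

theorem even_card [Fintype ι] (hσ : σ.IsFixedPointFreeInvolution) : Even (Fintype.card ι) := by
  classical
  have hsupp : σ.supportᶜ = ∅ :=
    compl_eq_empty_iff _ |>.2 <| eq_univ_iff_forall.2 fun x => mem_support.2 (hσ.2 x)
  have := card_compl_support_modEq (p := 2) (n := 1) (by rw [pow_one, sq, hσ.1])
  rw [hsupp, card_empty] at this
  exact Nat.even_iff.2 this.symm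

theorem subtypePerm {p : ι → Prop} (hσ : σ.IsFixedPointFreeInvolution) (hp : ∀ x, p (σ x) ↔ p x) :
    (σ.subtypePerm hp).IsFixedPointFreeInvolution := by
  refine ⟨?_, fun x hx => hσ.2 x (congrArg Subtype.val hx)⟩
  simp only [subtypePerm_mul, hσ.1]
  rfl

theorem subtypeCongr {p : ι → Prop} [DecidablePred p] {e : Perm {x // p x}}
    {f : Perm {x // ¬p x}} (he : e.IsFixedPointFreeInvolution)
    (hf : f.IsFixedPointFreeInvolution) : (e.subtypeCongr f).IsFixedPointFreeInvolution := by
  refine ⟨?_, fun x => ?_⟩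
  · calc e.subtypeCongr f * e.subtypeCongr f = subtypeCongrHom p ((e, f) * (e, f)) :=
          (map_mul (subtypeCongrHom p) (e, f) (e, f)).symm
      _ = 1 := by rw [Prod.mk_mul_mk, he.1, hf.1, Prod.mk_one_one, map_one]
  · by_cases hx : p x
    · rw [subtypeCongr.left_apply _ _ hx]
      exact fun h => he.2 ⟨x, hx⟩ (Subtype.ext h)
    · rw [subtypeCongr.right_apply _ _ hx]
      exact fun h => hf.2 ⟨x, hx⟩ (Subtype.ext h)

end IsFixedPointFreeInvolution

end Equiv.Perm

theorem Finset.sum_range_two_mul_add_one_of_odd {M : Type*} [AddCommMonoid M] (m : ℕ)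
    (f : ℕ → M) (hf : ∀ j, Odd j → f j = 0) :
    ∑ j ∈ range (2 * m + 1), f j = ∑ k ∈ range (m + 1), f (2 * k) := by
  induction m with
  | zero => simp
  | succ m ih =>
    rw [show 2 * (m + 1) + 1 = 2 * m + 1 + 1 + 1 by ring, sum_range_succ, sum_range_succ, ih,
      hf _ (odd_two_mul_add_one m), add_zero, sum_range_succ (n := m + 1)]
    rfl

theorem Equiv.Perm.IsFixedPointFreeInvolution.filter_lt_union_image {ι : Type*} [LinearOrder ι]
    {σ : Perm ι} (hσ : σ.IsFixedPointFreeInvolution) {α : Finset ι} (hα : ∀ x, σ x ∈ α ↔ x ∈ α) :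
    α.filter (fun i => i < σ i) ∪ (α.filter fun i => i < σ i).image σ = α := by
  ext x
  simp only [mem_union, mem_filter, mem_image]
  constructor
  · rintro (⟨hx, -⟩ | ⟨y, ⟨hy, -⟩, rfl⟩)
    exacts [hx, (hα y).2 hy]
  · intro hx
    rcases lt_or_gt_of_ne (hσ.2 x).symm with hlt | hgt
    · exact Or.inl ⟨hx, hlt⟩
    · exact Or.inr ⟨σ x, ⟨(hα x).2 hx, by rwa [hσ.involutive x]⟩, hσ.involutive x⟩

theorem Function.Involutive.filter_lt_union_image {ι : Type*} [LinearOrder ι] {σ : ι → ι}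
    (hσ : Function.Involutive σ) {t : Finset ι} (ht : ∀ i ∈ t, i < σ i) :
    (t ∪ t.image σ).filter (fun i => i < σ i) = t := by
  ext x
  simp only [mem_filter, mem_union, mem_image]
  constructor
  · rintro ⟨hx | ⟨y, hy, rfl⟩, hlt⟩
    · exact hx
    · rw [hσ y] at hlt
      exact absurd hlt (lt_asymm (ht y hy))
  · intro hx
    exact ⟨Or.inl hx, ht x hx⟩

section Hafnian

variable {ι : Type*} [Fintype ι] [LinearOrder ι] {R : Type*} [CommSemiring R]

theorem hafnian_eq_sum (A : Matrix ι ι R) :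
    hafnian A = ∑ σ ∈ univ.filter Perm.IsFixedPointFreeInvolution,
      ∏ i ∈ univ.filter (fun i => i < σ i), A i (σ i) :=
  rfl

theorem hafnian_eq_zero_of_odd_card (A : Matrix ι ι R) (h : Odd (Fintype.card ι)) :
    hafnian A = 0 := by
  rw [hafnian_eq_sum, filter_false_of_mem, sum_empty]
  exact fun σ _ hσ => Nat.not_even_iff_odd.2 h hσ.even_card

theorem Equiv.Perm.IsFixedPointFreeInvolution.prod_add_eq_sum_invariant {σ : Perm ι}
    (hσ : σ.IsFixedPointFreeInvolution) (a b : ι → R) :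
    ∏ i ∈ univ.filter (fun i => i < σ i), (a i + b i) =
      ∑ α ∈ univ.filter (fun α : Finset ι => ∀ x, σ x ∈ α ↔ x ∈ α),
        (∏ i ∈ univ.filter (fun i => i ∈ α ∧ i < σ i), a i) *
          ∏ i ∈ univ.filter (fun i => i ∉ α ∧ i < σ i), b i := by
  have hinv := hσ.involutive
  set S := univ.filter fun i => i < σ i
  rw [prod_add]
  symm
  refine sum_nbij' (fun α => α.filter fun i => i < σ i) (fun t => t ∪ t.image σ) ?_ ?_ ?_ ?_ ?_
  · intro α _
    exact mem_powerset.2 (filter_subset_filter _ (subset_univ α))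
  · intro t _
    refine mem_filter.2 ⟨mem_univ _, fun x => ?_⟩
    simp only [mem_union, mem_image, hinv.eq_iff, exists_eq_right, hinv x]
    exact or_comm
  · intro α hα
    exact hσ.filter_lt_union_image (mem_filter.1 hα).2
  · intro t ht
    exact hinv.filter_lt_union_image fun i hi => (mem_filter.1 (mem_powerset.1 ht hi)).2
  · intro α _
    have hin : univ.filter (fun i => i ∈ α ∧ i < σ i) = α.filter fun i => i < σ i := by
      ext; simp
    have hout : univ.filter (fun i => i ∉ α ∧ i < σ i) = S \ α.filter fun i => i < σ i := by
      ext x; by_cases hx : x ∈ α <;> simp [S, hx]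
    rw [hin, hout]

theorem prod_filter_lt_subtypePerm {M : Type*} [CommMonoid M] {p : ι → Prop} [DecidablePred p]
    [Fintype {x // p x}] (σ : Perm ι) (hp : ∀ x, p (σ x) ↔ p x) (g : ι → ι → M) :
    ∏ i ∈ univ.filter (fun i : {x // p x} => i < σ.subtypePerm hp i), g i (σ.subtypePerm hp i)
      = ∏ i ∈ univ.filter (fun i => p i ∧ i < σ i), g i (σ i) := by
  rw [← filter_filter, prod_filter, prod_filter]
  exact (prod_subtype _ (fun x => by simp) (fun i => if i < σ i then g i (σ i) else 1)).symm

theorem hafnian_submatrix_mul_hafnian_submatrix_compl (A B : Matrix ι ι R) (α : Finset ι) :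
    hafnian (A.submatrix (fun i : {x // x ∈ α} => (i : ι)) (fun i : {x // x ∈ α} => (i : ι))) *
        hafnian (B.submatrix (fun i : {x // x ∉ α} => (i : ι)) (fun i : {x // x ∉ α} => (i : ι))) =
      ∑ σ ∈ univ.filter (fun σ : Perm ι => σ.IsFixedPointFreeInvolution ∧ ∀ x, σ x ∈ α ↔ x ∈ α),
        (∏ i ∈ univ.filter (fun i => i ∈ α ∧ i < σ i), A i (σ i)) *
          ∏ i ∈ univ.filter (fun i => i ∉ α ∧ i < σ i), B i (σ i) := by
  rw [hafnian_eq_sum, hafnian_eq_sum, sum_mul_sum, ← sum_product']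
  symm
  have hα {σ : Perm ι} (hσ : σ ∈ univ.filter fun σ : Perm ι =>
      σ.IsFixedPointFreeInvolution ∧ ∀ x, σ x ∈ α ↔ x ∈ α) : ∀ x, σ x ∈ α ↔ x ∈ α :=
    (mem_filter.1 hσ).2.2
  refine sum_bij'
    (fun σ hσ => (σ.subtypePerm (hα hσ), σ.subtypePerm fun x => not_congr (hα hσ x)))
    (fun ef _ => ef.1.subtypeCongr ef.2) ?_ ?_ ?_ ?_ ?_
  · intro σ hσ
    obtain ⟨-, hσ, -⟩ := mem_filter.1 hσ
    simp only [mem_product, mem_filter, mem_univ, true_and]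
    exact ⟨hσ.subtypePerm _, hσ.subtypePerm _⟩
  · rintro ⟨e, f⟩ hef
    simp only [mem_product, mem_filter, mem_univ, true_and] at hef
    refine mem_filter.2 ⟨mem_univ _, hef.1.subtypeCongr hef.2, fun x => ?_⟩
    by_cases hx : x ∈ α
    · simp [Perm.subtypeCongr.left_apply _ _ hx, hx]
    · simpa [Perm.subtypeCongr.right_apply _ _ hx, hx] using (f ⟨x, hx⟩).2
  · intro σ hσ
    ext x
    by_cases hx : x ∈ α
    · simp [Perm.subtypeCongr.left_apply _ _ hx]
    · simp [Perm.subtypeCongr.right_apply _ _ hx]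
  · rintro ⟨e, f⟩ -
    ext x <;> simp
  · intro σ hσ
    exact congr_arg₂ (· * ·) (prod_filter_lt_subtypePerm σ (hα hσ) A).symm
      (prod_filter_lt_subtypePerm σ (fun x => not_congr (hα hσ x)) B).symm

theorem hafnian_add_eq_sum_powerset (A B : Matrix ι ι R) :
    hafnian (A + B) =
      ∑ α ∈ (univ : Finset ι).powerset,
        hafnian (A.submatrix (fun i : {x // x ∈ α} => (i : ι)) (fun i : {x // x ∈ α} => (i : ι))) *
          hafnian (B.submatrix (fun i : {x // x ∉ α} => (i : ι))
            (fun i : {x // x ∉ α} => (i : ι))) := by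
  calc hafnian (A + B)
      = ∑ σ ∈ univ.filter Perm.IsFixedPointFreeInvolution,
          ∑ α ∈ univ.filter (fun α : Finset ι => ∀ x, σ x ∈ α ↔ x ∈ α),
            (∏ i ∈ univ.filter (fun i => i ∈ α ∧ i < σ i), A i (σ i)) *
              ∏ i ∈ univ.filter (fun i => i ∉ α ∧ i < σ i), B i (σ i) :=
        sum_congr rfl fun σ hσ => (mem_filter.1 hσ).2.prod_add_eq_sum_invariant _ _
    _ = ∑ α : Finset ι,
          ∑ σ ∈ univ.filter (fun σ : Perm ι => σ.IsFixedPointFreeInvolution ∧ ∀ x, σ x ∈ α ↔ x ∈ α),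
            (∏ i ∈ univ.filter (fun i => i ∈ α ∧ i < σ i), A i (σ i)) *
              ∏ i ∈ univ.filter (fun i => i ∉ α ∧ i < σ i), B i (σ i) :=
        sum_comm' fun σ α => by simp only [mem_filter, mem_univ, true_and, and_true]
    _ = _ := by
      rw [powerset_univ]
      exact sum_congr rfl fun α _ => (hafnian_submatrix_mul_hafnian_submatrix_compl A B α).symm

end Hafnian

theorem hafnian_add_general {R : Type*} [CommRing R] (m : ℕ)
    (A B : Matrix (Fin (2 * m)) (Fin (2 * m)) R) :
    hafnian (A + B) =
      ∑ k ∈ Finset.range (m + 1),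
        ∑ α ∈ Finset.powersetCard (2 * k) (Finset.univ : Finset (Fin (2 * m))),
          hafnian (A.submatrix
              (fun i : {x : Fin (2 * m) // x ∈ α} => (i : Fin (2 * m)))
              (fun i : {x : Fin (2 * m) // x ∈ α} => (i : Fin (2 * m)))) *
          hafnian (B.submatrix
              (fun i : {x : Fin (2 * m) // x ∉ α} => (i : Fin (2 * m)))
              (fun i : {x : Fin (2 * m) // x ∉ α} => (i : Fin (2 * m)))) := by
  rw [hafnian_add_eq_sum_powerset, sum_powerset, card_univ, Fintype.card_fin,
    sum_range_two_mul_add_one_of_odd]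
  intro j hj
  refine sum_eq_zero fun α hα => ?_
  rw [hafnian_eq_zero_of_odd_card, zero_mul]
  simpa [(mem_powersetCard.1 hα).2] using hj

/-- For symmetric matrices `A`, `B` of order `2m` with zero diagonal,
`Hf(A + B) = Σ_{k=0}^{m} Σ_{α ∈ Q_{2k,2m}} Hf(A[α]) · Hf(B(α))`, where `A[α]` is the
principal submatrix of `A` on the rows/columns in `α` and `B(α)` is the principal
submatrix of `B` on the rows/columns not in `α`. -/
theorem hafnian_add {R : Type*} [CommRing R] (m : ℕ)
    (A B : Matrix (Fin (2 * m)) (Fin (2 * m)) R)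
    (hA : A.IsSymm) (hB : B.IsSymm)
    (hdA : ∀ i, A i i = 0) (hdB : ∀ i, B i i = 0) :
    hafnian (A + B) =
      ∑ k ∈ Finset.range (m + 1),
        ∑ α ∈ Finset.powersetCard (2 * k) (Finset.univ : Finset (Fin (2 * m))),
          hafnian (A.submatrix
              (fun i : {x : Fin (2 * m) // x ∈ α} => (i : Fin (2 * m)))
              (fun i : {x : Fin (2 * m) // x ∈ α} => (i : Fin (2 * m)))) *
          hafnian (B.submatrix
              (fun i : {x : Fin (2 * m) // x ∉ α} => (i : Fin (2 * m)))
              (fun i : {x : Fin (2 * m) // x ∉ α} => (i : Fin (2 * m)))) :=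
  hafnian_add_general m A B
end

section
/- Let n be a positive integer and k a non-negative integer with k < n/2. Then the number of k-element sets of edges of the path graph P_n in which no two edges share a common vertex (i.e., the number of matchings of P_n with exactly k edges) equals the binomial coefficient C(n−k, k). -/
namespace PathMatchAux

variable (n k : ℕ)

/-- The `i`-th edge of the path graph, as an element of `Sym2 (Fin n)`. -/
def edge (i : Fin (n - 1)) : Sym2 (Fin n) :=
  s(⟨i, by omega⟩, ⟨(i : ℕ) + 1, by omega⟩)

lemma edge_injective : Function.Injective (edge n) := by
  intro i j h
  simp only [edge, Sym2.eq_iff, Fin.mk.injEq] at h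
  apply Fin.ext
  omega

lemma edge_mem_edgeSet (i : Fin (n - 1)) : edge n i ∈ (SimpleGraph.pathGraph n).edgeSet := by
  rw [edge, SimpleGraph.mem_edgeSet, SimpleGraph.pathGraph_adj]
  left; rfl

lemma mem_edgeSet_iff (e : Sym2 (Fin n)) :
    e ∈ (SimpleGraph.pathGraph n).edgeSet ↔ ∃ i : Fin (n - 1), e = edge n i := by
  constructor
  · induction e with
    | _ u v =>
      intro h
      rw [SimpleGraph.mem_edgeSet, SimpleGraph.pathGraph_adj] at h
      rcases h with h | h
      · refine ⟨⟨(u : ℕ), by omega⟩, ?_⟩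
        rw [edge, Sym2.eq_iff]
        exact Or.inl ⟨Fin.ext rfl, Fin.ext h.symm⟩
      · refine ⟨⟨(v : ℕ), by omega⟩, ?_⟩
        rw [edge, Sym2.eq_iff]
        exact Or.inr ⟨Fin.ext h.symm, Fin.ext rfl⟩
  · rintro ⟨i, rfl⟩
    exact edge_mem_edgeSet n i

lemma mem_edge_iff (i : Fin (n - 1)) (v : Fin n) :
    v ∈ edge n i ↔ (v : ℕ) = i ∨ (v : ℕ) = (i : ℕ) + 1 := by
  simp only [edge, Sym2.mem_iff]
  constructor
  · rintro (rfl | rfl) <;> simp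
  · rintro (h | h)
    · left; exact Fin.ext h
    · right; exact Fin.ext h

/-- The type of `k`-edge matchings of the path graph. -/
abbrev MType := {M : Finset (Sym2 (Fin n)) //
    M.card = k ∧
    (∀ e ∈ M, e ∈ (SimpleGraph.pathGraph n).edgeSet) ∧
    (∀ e ∈ M, ∀ f ∈ M, e ≠ f → ∀ v, v ∈ e → v ∉ f)}

/-- The type of "sparse" sets of starting positions. -/
abbrev SType := {S : Finset (Fin (n - 1)) //
    S.card = k ∧ ∀ i ∈ S, ∀ j ∈ S, i ≠ j → (i : ℕ) + 1 ≠ (j : ℕ) ∧ (j : ℕ) + 1 ≠ (i : ℕ)}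

/-- The type of plain `k`-subsets. -/
abbrev TType := {T : Finset (Fin (n - k)) // T.card = k}

noncomputable def equivMS : MType n k ≃ SType n k where
  toFun M := ⟨Finset.univ.filter (fun i => edge n i ∈ M.1), by
    obtain ⟨hcard, hedge, hdisj⟩ := M.2
    constructor
    · have himg : Finset.image (edge n) (Finset.univ.filter (fun i => edge n i ∈ M.1)) = M.1 := by
        ext e
        simp only [Finset.mem_image, Finset.mem_filter, Finset.mem_univ, true_and]
        constructor
        · rintro ⟨i, hi, rfl⟩; exact hi
        · intro he
          obtain ⟨i, rfl⟩ := (mem_edgeSet_iff n e).1 (hedge e he)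
          exact ⟨i, he, rfl⟩
      have := congrArg Finset.card himg
      rw [Finset.card_image_of_injective _ (edge_injective n)] at this
      rw [this, hcard]
    · intro i hi j hj hij
      simp only [Finset.mem_filter, Finset.mem_univ, true_and] at hi hj
      have hne : edge n i ≠ edge n j := fun h => hij (edge_injective n h)
      have := hdisj _ hi _ hj hne
      constructor
      · intro h
        exact this ⟨(i : ℕ) + 1, by omega⟩ ((mem_edge_iff n i _).2 (Or.inr rfl))
          ((mem_edge_iff n j _).2 (Or.inl h))
      · intro h
        exact this ⟨(i : ℕ), by omega⟩ ((mem_edge_iff n i _).2 (Or.inl rfl))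
          ((mem_edge_iff n j _).2 (Or.inr h.symm))⟩
  invFun S := ⟨S.1.image (edge n), by
    obtain ⟨hcard, hgap⟩ := S.2
    refine ⟨by rw [Finset.card_image_of_injective _ (edge_injective n), hcard], ?_, ?_⟩
    · intro e he
      obtain ⟨i, hi, rfl⟩ := Finset.mem_image.1 he
      exact edge_mem_edgeSet n i
    · intro e he f hf hef v hv hvf
      obtain ⟨i, hi, rfl⟩ := Finset.mem_image.1 he
      obtain ⟨j, hj, rfl⟩ := Finset.mem_image.1 hf
      have hij : i ≠ j := fun h => hef (by rw [h])
      have hg := hgap i hi j hj hij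
      rw [mem_edge_iff] at hv hvf
      have hij' : (i : ℕ) ≠ (j : ℕ) := fun h => hij (Fin.ext h)
      omega⟩
  left_inv := by
    rintro ⟨M, hcard, hedge, hdisj⟩
    apply Subtype.ext
    simp only
    ext e
    simp only [Finset.mem_image, Finset.mem_filter, Finset.mem_univ, true_and]
    constructor
    · rintro ⟨i, hi, rfl⟩; exact hi
    · intro he
      obtain ⟨i, rfl⟩ := (mem_edgeSet_iff n e).1 (hedge e he)
      exact ⟨i, he, rfl⟩
  right_inv := by
    rintro ⟨S, hcard, hgap⟩
    apply Subtype.ext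
    simp only
    ext i
    simp only [Finset.mem_filter, Finset.mem_univ, true_and, Finset.mem_image]
    constructor
    · rintro ⟨j, hj, hji⟩
      rwa [← edge_injective n hji]
    · intro hi; exact ⟨i, hi, rfl⟩

section SparseEquiv

/-- Chaining a uniform-gap condition. -/
lemma chain_le {m : ℕ} {h : Fin k → ℕ} (hm : ∀ a b : Fin k, a < b → h a + m ≤ h b)
    (a b : Fin k) (hab : a < b) : h a + m * ((b : ℕ) - (a : ℕ)) ≤ h b := by
  obtain ⟨d, hd⟩ : ∃ d, (b : ℕ) = (a : ℕ) + d + 1 := ⟨(b : ℕ) - (a : ℕ) - 1, by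
    have : (a : ℕ) < (b : ℕ) := hab
    omega⟩
  clear hab
  induction d generalizing b with
  | zero =>
    have hab : a < b := by rw [Fin.lt_def]; omega
    have := hm a b hab
    have e1 : (b : ℕ) - (a : ℕ) = 1 := by omega
    rw [e1, Nat.mul_one]
    omega
  | succ d ih =>
    have hb' : (a : ℕ) + d + 1 < k := by have := b.isLt; omega
    set b' : Fin k := ⟨(a : ℕ) + d + 1, hb'⟩ with hb'def
    have h1 := ih b' rfl
    have hlt : b' < b := by rw [Fin.lt_def]; simp only [hb'def]; omega
    have h2 := hm b' b hlt
    have e1 : (b : ℕ) - (a : ℕ) = d + 2 := by omega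
    have e2 : (b' : ℕ) - (a : ℕ) = d + 1 := by simp only [hb'def]; omega
    rw [e2] at h1
    rw [e1]
    have e3 : m * (d + 2) = m * (d + 1) + m := by ring
    rw [e3]
    omega

/-- Strictly monotone functions `Fin k → Fin (n-1)` with gaps of size `≥ 2`. -/
abbrev SFun := {f : Fin k → Fin (n - 1) //
    StrictMono f ∧ ∀ a b : Fin k, a < b → (f a : ℕ) + 2 ≤ (f b : ℕ)}

/-- Strictly monotone functions `Fin k → Fin (n-k)`. -/
abbrev TFun := {g : Fin k → Fin (n - k) // StrictMono g}

lemma sfun_bounds (f : SFun n k) (j : Fin k) :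
    (j : ℕ) ≤ (f.1 j : ℕ) ∧ (f.1 j : ℕ) + 2 * (k - 1 - (j : ℕ)) < n - 1 := by
  have hk0 : 0 < k := by have := j.isLt; omega
  have hlast : k - 1 < k := by omega
  have hjle : (j : ℕ) ≤ k - 1 := by have := j.isLt; omega
  have hm : ∀ a b : Fin k, a < b → (fun x => (f.1 x : ℕ)) a + 2 ≤ (fun x => (f.1 x : ℕ)) b :=
    fun a b hab => f.2.2 a b hab
  constructor
  · rcases Nat.eq_zero_or_pos (j : ℕ) with h | h
    · omega
    · have hc := chain_le k hm ⟨0, hk0⟩ j (by rw [Fin.lt_def]; simpa)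
      simp only [Fin.val_mk, Nat.sub_zero] at hc
      omega
  · rcases eq_or_lt_of_le hjle with h | h
    · have hb := (f.1 ⟨k - 1, hlast⟩).isLt
      have hcongr : f.1 j = f.1 ⟨k - 1, hlast⟩ := congrArg _ (Fin.ext h)
      rw [hcongr]
      omega
    · have hc := chain_le k hm j ⟨k - 1, hlast⟩ (by rw [Fin.lt_def]; simpa)
      have hb := (f.1 ⟨k - 1, hlast⟩).isLt
      simp only [Fin.val_mk] at hc hb
      omega

lemma image_univ_orderEmbOfFin {m : ℕ} (s : Finset (Fin m)) {k : ℕ}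
    (h : s.card = k) : Finset.univ.image (s.orderEmbOfFin h) = s := by
  ext x
  rw [Finset.mem_image]
  constructor
  · rintro ⟨j, _, rfl⟩
    exact Finset.orderEmbOfFin_mem s h j
  · intro hx
    have : x ∈ Set.range (s.orderEmbOfFin h) := by
      rw [Finset.range_orderEmbOfFin]; exact hx
    obtain ⟨j, hj⟩ := this
    exact ⟨j, Finset.mem_univ j, hj⟩

noncomputable def equivSSF : SType n k ≃ SFun n k where
  toFun S := ⟨S.1.orderEmbOfFin S.2.1, (S.1.orderEmbOfFin S.2.1).strictMono, by
    intro a b hab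
    set f := S.1.orderEmbOfFin S.2.1 with hf
    have h1 : f a < f b := (S.1.orderEmbOfFin S.2.1).strictMono hab
    have h2 : f a ∈ S.1 := Finset.orderEmbOfFin_mem S.1 S.2.1 a
    have h3 : f b ∈ S.1 := Finset.orderEmbOfFin_mem S.1 S.2.1 b
    have h4 := S.2.2 _ h2 _ h3 (ne_of_lt h1)
    have h5 : (f a : ℕ) < (f b : ℕ) := h1
    omega⟩
  invFun f := ⟨Finset.univ.image f.1, by
    constructor
    · rw [Finset.card_image_of_injective _ f.2.1.injective, Finset.card_univ, Fintype.card_fin]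
    · intro i hi j hj hij
      obtain ⟨a, _, rfl⟩ := Finset.mem_image.1 hi
      obtain ⟨b, _, rfl⟩ := Finset.mem_image.1 hj
      have hab : a ≠ b := fun h => hij (by rw [h])
      rcases hab.lt_or_gt with h | h
      · have := f.2.2 a b h
        omega
      · have := f.2.2 b a h
        omega⟩
  left_inv S := by
    apply Subtype.ext
    exact image_univ_orderEmbOfFin S.1 S.2.1
  right_inv f := by
    apply Subtype.ext
    exact (Finset.orderEmbOfFin_unique _ (fun x =>
      Finset.mem_image_of_mem f.1 (Finset.mem_univ x)) f.2.1).symm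

noncomputable def equivTTF : TType n k ≃ TFun n k where
  toFun T := ⟨T.1.orderEmbOfFin T.2, (T.1.orderEmbOfFin T.2).strictMono⟩
  invFun g := ⟨Finset.univ.image g.1, by
    rw [Finset.card_image_of_injective _ g.2.injective, Finset.card_univ, Fintype.card_fin]⟩
  left_inv T := by
    apply Subtype.ext
    exact image_univ_orderEmbOfFin T.1 T.2
  right_inv g := by
    apply Subtype.ext
    exact (Finset.orderEmbOfFin_unique _ (fun x =>
      Finset.mem_image_of_mem g.1 (Finset.mem_univ x)) g.2).symm

def equivFun : SFun n k ≃ TFun n k where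
  toFun f := ⟨fun j => ⟨(f.1 j : ℕ) - (j : ℕ), by
      have := sfun_bounds n k f j
      have := j.isLt
      omega⟩, by
    intro a b hab
    rw [Fin.lt_def]
    simp only [Fin.val_mk]
    have hm : ∀ a b : Fin k, a < b → (fun x => (f.1 x : ℕ)) a + 2 ≤ (fun x => (f.1 x : ℕ)) b :=
      fun a b h => f.2.2 a b h
    have h1 := chain_le k hm a b hab
    have h2 := (sfun_bounds n k f a).1
    have h3 : (a : ℕ) < (b : ℕ) := hab
    omega⟩
  invFun g := ⟨fun j => ⟨(g.1 j : ℕ) + (j : ℕ), by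
      have h1 := (g.1 j).isLt
      have h2 := j.isLt
      omega⟩, by
    constructor
    · intro a b hab
      rw [Fin.lt_def]
      simp only [Fin.val_mk]
      have h1 : g.1 a < g.1 b := g.2 hab
      have h2 : (g.1 a : ℕ) < (g.1 b : ℕ) := h1
      have h3 : (a : ℕ) < (b : ℕ) := hab
      omega
    · intro a b hab
      simp only [Fin.val_mk]
      have hm : ∀ a b : Fin k, a < b → (fun x => (g.1 x : ℕ)) a + 1 ≤ (fun x => (g.1 x : ℕ)) b := by
        intro a b h
        exact g.2 h
      have := chain_le k hm a b hab
      have h3 : (a : ℕ) < (b : ℕ) := hab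
      omega⟩
  left_inv f := by
    apply Subtype.ext
    funext j
    apply Fin.ext
    simp only [Fin.val_mk]
    have := (sfun_bounds n k f j).1
    omega
  right_inv g := by
    apply Subtype.ext
    funext j
    apply Fin.ext
    simp only [Fin.val_mk]
    omega

noncomputable def equivST : SType n k ≃ TType n k :=
  (equivSSF n k).trans ((equivFun n k).trans (equivTTF n k).symm)

end SparseEquiv

end PathMatchAux

/-- For `n ≥ 1` and `k < n/2`, the number of `k`-edge matchings of the
path graph `P_n` (sets of `k` edges of `P_n`, no two of which share a vertex)
equals the binomial coefficient `C(n - k, k)`. -/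
theorem card_matchings_pathGraph (n k : ℕ) (hn : 0 < n) (hk : 2 * k < n) :
    Nat.card {M : Finset (Sym2 (Fin n)) //
        M.card = k ∧
        (∀ e ∈ M, e ∈ (SimpleGraph.pathGraph n).edgeSet) ∧
        (∀ e ∈ M, ∀ f ∈ M, e ≠ f → ∀ v, v ∈ e → v ∉ f)} =
      Nat.choose (n - k) k := by
  have h1 := Nat.card_congr ((PathMatchAux.equivMS n k).trans (PathMatchAux.equivST n k))
  rw [h1, Nat.card_eq_fintype_card, Fintype.card_finset_len, Fintype.card_fin]
end

section
/- For every positive integer n and every non-negative integer k with k < n/2, the number of k-edge matchings of the path graph P_{n+k−1} equals the number of k-element subsets of the edge set of the path graph P_n; that is, E_{n+k−1}^k = C(n−1, k). -/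
open Finset
namespace MatchingsAux

def lo {m : ℕ} : Sym2 (Fin m) → ℕ :=
  Sym2.lift ⟨fun a b => min a.1 b.1, fun _ _ => Nat.min_comm _ _⟩

@[simp] lemma lo_mk {m : ℕ} (a b : Fin m) : lo s(a, b) = min a.1 b.1 := rfl

def edg {m : ℕ} (x : ℕ) (hx : x + 1 < m) : Sym2 (Fin m) :=
  s(⟨x, by omega⟩, ⟨x + 1, hx⟩)

lemma lo_edg {m : ℕ} (x : ℕ) (hx : x + 1 < m) : lo (edg x hx) = x := by
  simp [edg, lo_mk]

lemma edg_inj {m : ℕ} {x y : ℕ} {hx : x + 1 < m} {hy : y + 1 < m}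
    (h : edg x hx = edg y hy) : x = y := by
  have := congrArg lo h
  rwa [lo_edg, lo_edg] at this

lemma mem_edg {m : ℕ} {x : ℕ} {hx : x + 1 < m} {v : Fin m} :
    v ∈ edg x hx ↔ v.1 = x ∨ v.1 = x + 1 := by
  simp [edg, Sym2.mem_iff, Fin.ext_iff]

lemma edg_mem_edgeSet {m : ℕ} (x : ℕ) (hx : x + 1 < m) :
    edg x hx ∈ (SimpleGraph.pathGraph m).edgeSet := by
  rw [edg, SimpleGraph.mem_edgeSet, SimpleGraph.pathGraph_adj]
  simp

lemma edge_char {m : ℕ} (e : Sym2 (Fin m)) (he : e ∈ (SimpleGraph.pathGraph m).edgeSet) :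
    ∃ (x : ℕ) (h1 : x + 1 < m), lo e = x ∧ e = edg x h1 := by
  revert he
  induction e using Sym2.ind with
  | _ a b =>
    intro he
    rw [SimpleGraph.mem_edgeSet, SimpleGraph.pathGraph_adj] at he
    rcases he with h | h
    · refine ⟨a.1, by omega, by simp [lo_mk]; omega, ?_⟩
      rw [edg, Sym2.eq_iff]
      left
      exact ⟨Fin.ext (by simp), Fin.ext (by simp; omega)⟩
    · refine ⟨b.1, by omega, by simp [lo_mk]; omega, ?_⟩
      rw [edg, Sym2.eq_iff]
      right
      exact ⟨Fin.ext (by simp; omega), Fin.ext (by simp)⟩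

def edgT {m : ℕ} (hm : 0 < m) (x : ℕ) : Sym2 (Fin m) :=
  s(⟨min x (m-1), by omega⟩, ⟨min (x+1) (m-1), by omega⟩)

lemma edgT_eq {m : ℕ} (hm : 0 < m) {x : ℕ} (hx : x + 1 < m) : edgT hm x = edg x hx := by
  rw [edgT, edg, Sym2.eq_iff]
  left
  exact ⟨Fin.ext (by simp; omega), Fin.ext (by simp; omega)⟩

lemma edgT_lo {m : ℕ} (hm : 0 < m) {e : Sym2 (Fin m)}
    (he : e ∈ (SimpleGraph.pathGraph m).edgeSet) : edgT hm (lo e) = e := by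
  obtain ⟨x, h1, hlo, rfl⟩ := edge_char e he
  rw [lo_edg, edgT_eq hm h1]

def equivA (m k : ℕ) (hm : 0 < m) :
    {M : Finset (Sym2 (Fin m)) //
        M.card = k ∧
        (∀ e ∈ M, e ∈ (SimpleGraph.pathGraph m).edgeSet) ∧
        (∀ e ∈ M, ∀ f ∈ M, e ≠ f → ∀ v, v ∈ e → v ∉ f)} ≃
    {S : Finset ℕ // S.card = k ∧ (∀ x ∈ S, x + 1 < m) ∧
        ∀ x ∈ S, ∀ y ∈ S, x ≠ y → x + 2 ≤ y ∨ y + 2 ≤ x} where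
  toFun M := ⟨M.1.image lo, by
    obtain ⟨M, hcard, hedge, hmatch⟩ := M
    refine ⟨?_, ?_, ?_⟩
    · rw [Finset.card_image_of_injOn, hcard]
      intro e he f hf hlo
      obtain ⟨x, h1, hx, rfl⟩ := edge_char e (hedge e he)
      obtain ⟨y, h2, hy, rfl⟩ := edge_char f (hedge f hf)
      rw [lo_edg, lo_edg] at hlo
      subst hlo
      rfl
    · intro x hx
      obtain ⟨e, he, rfl⟩ := Finset.mem_image.1 hx
      obtain ⟨y, h1, hy, rfl⟩ := edge_char e (hedge e he)
      rw [lo_edg]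
      exact h1
    · intro x hx y hy hxy
      obtain ⟨e, he, rfl⟩ := Finset.mem_image.1 hx
      obtain ⟨f, hf, rfl⟩ := Finset.mem_image.1 hy
      obtain ⟨a, h1, ha, rfl⟩ := edge_char e (hedge e he)
      obtain ⟨b, h2, hb, rfl⟩ := edge_char f (hedge f hf)
      rw [lo_edg a h1, lo_edg b h2] at hxy ⊢
      have hef : edg a h1 ≠ edg b h2 := fun h => hxy (edg_inj h)
      have k1 := hmatch _ he _ hf hef ⟨a, by omega⟩ (mem_edg.2 (Or.inl rfl))
      have k2 := hmatch _ he _ hf hef ⟨a + 1, h1⟩ (mem_edg.2 (Or.inr rfl))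
      rw [mem_edg, not_or] at k1 k2
      simp only [] at k1 k2
      omega⟩
  invFun S := ⟨S.1.image (edgT hm), by
    obtain ⟨S, hcard, hbd, hsp⟩ := S
    refine ⟨?_, ?_, ?_⟩
    · rw [Finset.card_image_of_injOn, hcard]
      intro x hx y hy h
      rw [edgT_eq hm (hbd x hx), edgT_eq hm (hbd y hy)] at h
      exact edg_inj h
    · intro e he
      obtain ⟨x, hx, rfl⟩ := Finset.mem_image.1 he
      rw [edgT_eq hm (hbd x hx)]
      exact edg_mem_edgeSet _ _
    · intro e he f hf hef v hv
      obtain ⟨x, hx, rfl⟩ := Finset.mem_image.1 he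
      obtain ⟨y, hy, rfl⟩ := Finset.mem_image.1 hf
      rw [edgT_eq hm (hbd x hx)] at hv hef
      rw [edgT_eq hm (hbd y hy)] at hef ⊢
      have hxy : x ≠ y := fun h => hef (by subst h; rfl)
      have := hsp x hx y hy hxy
      rw [mem_edg] at hv ⊢
      omega⟩
  left_inv := by
    rintro ⟨M, hcard, hedge, hmatch⟩
    apply Subtype.ext
    simp only [Finset.image_image]
    rw [show M.image (edgT hm ∘ lo) = M.image id from
      Finset.image_congr (fun e he => edgT_lo hm (hedge e he)), Finset.image_id]
  right_inv := by
    rintro ⟨S, hcard, hbd, hsp⟩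
    apply Subtype.ext
    simp only [Finset.image_image]
    rw [show S.image (lo ∘ edgT hm) = S.image id from
      Finset.image_congr (fun x hx => by
        simp only [Function.comp_apply, id_eq, edgT_eq hm (hbd x hx), lo_edg]), Finset.image_id]

/-- sparse finsets of ℕ ↔ sparse strictly monotone tuples -/
def equivB (m k : ℕ) :
    {S : Finset ℕ // S.card = k ∧ (∀ x ∈ S, x + 1 < m) ∧
        ∀ x ∈ S, ∀ y ∈ S, x ≠ y → x + 2 ≤ y ∨ y + 2 ≤ x} ≃
    {f : Fin k → ℕ // StrictMono f ∧ (∀ i, f i + 1 < m) ∧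
        ∀ i j : Fin k, i < j → f i + 2 ≤ f j} where
  toFun S := ⟨S.1.orderEmbOfFin S.2.1, (S.1.orderEmbOfFin S.2.1).strictMono, by
    obtain ⟨S, hcard, hbd, hsp⟩ := S
    dsimp only
    constructor
    · intro i
      exact hbd _ (Finset.orderEmbOfFin_mem S hcard i)
    · intro i j hij
      have hlt : S.orderEmbOfFin hcard i < S.orderEmbOfFin hcard j :=
        (S.orderEmbOfFin hcard).strictMono hij
      have := hsp _ (Finset.orderEmbOfFin_mem S hcard i) _
        (Finset.orderEmbOfFin_mem S hcard j) (by omega)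
      omega⟩
  invFun f := ⟨Finset.image f.1 Finset.univ, by
    obtain ⟨f, hmono, hbd, hsp⟩ := f
    refine ⟨?_, ?_, ?_⟩
    · rw [Finset.card_image_of_injective _ hmono.injective, Finset.card_univ,
        Fintype.card_fin]
    · intro x hx
      obtain ⟨i, _, rfl⟩ := Finset.mem_image.1 hx
      exact hbd i
    · intro x hx y hy hxy
      obtain ⟨i, _, rfl⟩ := Finset.mem_image.1 hx
      obtain ⟨j, _, rfl⟩ := Finset.mem_image.1 hy
      rcases lt_trichotomy i j with h | h | h
      · exact Or.inl (hsp i j h)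
      · exact absurd (congrArg f h) hxy
      · exact Or.inr (hsp j i h)⟩
  left_inv := by
    rintro ⟨S, hcard, hrest⟩
    apply Subtype.ext
    apply Finset.coe_inj.1
    rw [Finset.coe_image, Finset.coe_univ, Set.image_univ, Finset.range_orderEmbOfFin]
  right_inv := by
    rintro ⟨f, hmono, hrest⟩
    apply Subtype.ext
    exact (Finset.orderEmbOfFin_unique _
      (fun x => Finset.mem_image_of_mem _ (Finset.mem_univ x)) hmono).symm

lemma chain {k : ℕ} {f : Fin k → ℕ} (hsp : ∀ i j : Fin k, i < j → f i + 2 ≤ f j) :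
    ∀ (d : ℕ) (i j : Fin k), (j : ℕ) = i + d → f i + 2 * d ≤ f j := by
  intro d
  induction d with
  | zero =>
    intro i j hij
    have : i = j := Fin.ext (by omega)
    subst this
    omega
  | succ d ih =>
    intro i j hij
    have hj' : (i : ℕ) + d < k := by have := j.2; omega
    have h1 := ih i ⟨i + d, hj'⟩ rfl
    have h2 := hsp ⟨i + d, hj'⟩ j (by rw [Fin.lt_def]; simp; omega)
    omega

/-- shift: subtract the index -/
def equivC (n k : ℕ) (hn : 0 < n) (hk : 2 * k < n) :
    {f : Fin k → ℕ // StrictMono f ∧ (∀ i, f i + 1 < n + k - 1) ∧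
        ∀ i j : Fin k, i < j → f i + 2 ≤ f j} ≃
    {g : Fin k → ℕ // StrictMono g ∧ ∀ i, g i < n - 1} where
  toFun f := ⟨fun i => f.1 i - i, by
    obtain ⟨f, hmono, hbd, hsp⟩ := f
    have hlow : ∀ i : Fin k, 2 * (i : ℕ) ≤ f i := fun i => by
      have := chain hsp i ⟨0, i.pos⟩ i (by simp)
      omega
    constructor
    · intro i j hij
      rw [Fin.lt_def] at hij
      have h1 := chain hsp ((j : ℕ) - i) i j (by omega)
      have h2 := hlow i
      simp only []
      omega
    · intro i
      have hk0 : 0 < k := i.pos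
      have h1 := chain hsp (k - 1 - i) i ⟨k - 1, by omega⟩ (by simp; omega)
      have h2 := hbd ⟨k - 1, by omega⟩
      have h3 := i.2
      simp only []
      omega⟩
  invFun g := ⟨fun i => g.1 i + i, by
    obtain ⟨g, hmono, hbd⟩ := g
    dsimp only
    refine ⟨?_, ?_, ?_⟩
    · intro i j hij
      have h1 := hmono hij
      rw [Fin.lt_def] at hij
      simp only []
      omega
    · intro i
      have h1 := hbd i
      have h2 := i.2
      have hk0 : 0 < k := i.pos
      omega
    · intro i j hij
      have h1 := hmono hij
      rw [Fin.lt_def] at hij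
      omega⟩
  left_inv := by
    rintro ⟨f, hmono, hbd, hsp⟩
    apply Subtype.ext
    funext i
    have hlow : 2 * (i : ℕ) ≤ f i := by
      have := chain hsp i ⟨0, i.pos⟩ i (by simp)
      omega
    simp only []
    omega
  right_inv := by
    rintro ⟨g, hmono, hbd⟩
    apply Subtype.ext
    funext i
    simp only []
    omega

/-- bounded ℕ tuples ↔ Fin tuples -/
def equivD (k N : ℕ) :
    {g : Fin k → ℕ // StrictMono g ∧ ∀ i, g i < N} ≃
    {g : Fin k → Fin N // StrictMono g} where
  toFun g := ⟨fun i => ⟨g.1 i, g.2.2 i⟩, fun i j hij => by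
    rw [Fin.lt_def]
    exact g.2.1 hij⟩
  invFun g := ⟨fun i => (g.1 i : ℕ), fun i j hij => g.2 hij, fun i => (g.1 i).2⟩
  left_inv g := Subtype.ext rfl
  right_inv g := Subtype.ext (funext fun i => Fin.ext rfl)

/-- Fin tuples ↔ finsets of size k -/
def equivE {α : Type*} [LinearOrder α] [Fintype α] [DecidableEq α] (k : ℕ) :
    {g : Fin k → α // StrictMono g} ≃ {s : Finset α // s.card = k} where
  toFun g := ⟨Finset.image g.1 Finset.univ, by
    rw [Finset.card_image_of_injective _ g.2.injective, Finset.card_univ, Fintype.card_fin]⟩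
  invFun s := ⟨s.1.orderEmbOfFin s.2, (s.1.orderEmbOfFin s.2).strictMono⟩
  left_inv g := Subtype.ext (Finset.orderEmbOfFin_unique _
      (fun x => Finset.mem_image_of_mem _ (Finset.mem_univ x)) g.2).symm
  right_inv s := Subtype.ext (by
    apply Finset.coe_inj.1
    rw [Finset.coe_image, Finset.coe_univ, Set.image_univ, Finset.range_orderEmbOfFin])





end MatchingsAux

/-- For `n ≥ 1` and `k < n/2`, the number of `k`-edge matchings of the
path graph `P_{n+k-1}` (sets of `k` edges, no two of which share a vertex) equals the
number of `k`-element subsets of the edge set of `P_n`, i.e. `E_{n+k-1}^k = C(n-1, k)`. -/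
theorem card_matchings_pathGraph_eq_choose (n k : ℕ) (hn : 0 < n) (hk : 2 * k < n) :
    Nat.card {M : Finset (Sym2 (Fin (n + k - 1))) //
        M.card = k ∧
        (∀ e ∈ M, e ∈ (SimpleGraph.pathGraph (n + k - 1)).edgeSet) ∧
        (∀ e ∈ M, ∀ f ∈ M, e ≠ f → ∀ v, v ∈ e → v ∉ f)} =
      Nat.choose (n - 1) k := by
  rcases Nat.eq_zero_or_pos k with rfl | hk0
  · rw [Nat.choose_zero_right, Nat.card_eq_one_iff_unique]
    constructor
    · exact ⟨fun a b => by
        apply Subtype.ext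
        rw [Finset.card_eq_zero.1 a.2.1, Finset.card_eq_zero.1 b.2.1]⟩
    · exact ⟨⟨∅, by simp⟩⟩
  · have hm : 0 < n + k - 1 := by omega
    rw [Nat.card_congr (((((MatchingsAux.equivA (n + k - 1) k hm).trans
        (MatchingsAux.equivB (n + k - 1) k)).trans
        (MatchingsAux.equivC n k hn hk)).trans
        (MatchingsAux.equivD k (n - 1))).trans
        (MatchingsAux.equivE k)),
      Nat.card_eq_fintype_card, Fintype.card_finset_len, Fintype.card_fin]
end

section
/- Let R be a commutative ring with unit, let a, b ∈ R, and let m be a positive integer. Let T_{a,b} be the symmetric Toeplitz matrix of order 2m whose diagonal entries are zero, whose entries on the subdiagonal and superdiagonal (positions (i,j) with |i−j| = 1) equal a, and all of whose other off-diagonal entries equal b. Then Hf(T_{a,b}) = Σ_{k=0}^{m} (a−b)^{m−k} · b^k · c_{m,k}, where c_{m,k} = (m+k)!/(k!·(m−k)!·2^k) is a natural number (equal to C(m+k, 2k)·(2k−1)!!) acting on R by repeated addition. -/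
/-- The Toeplitz matrix `T_{a,b}` of order `n`: zero diagonal, entries `a` on the
sub- and superdiagonal, and entries `b` elsewhere. -/
def toeplitzAB {R : Type*} (n : ℕ) (a b : R) [Zero R] : Matrix (Fin n) (Fin n) R :=
  fun i j =>
    if i = j then 0
    else if (i : ℕ) + 1 = (j : ℕ) ∨ (j : ℕ) + 1 = (i : ℕ) then a
    else b

open Finset Equiv

/-- Number of fixed-point-free involutions on `n` points. -/
def invCount : ℕ → ℕ
  | 0 => 1
  | 1 => 0
  | (n+2) => (n+1) * invCount n

lemma invCount_mul (k : ℕ) : invCount (2*k) * (Nat.factorial k * 2^k) = Nat.factorial (2*k) := by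
  induction k with
  | zero => simp [invCount]
  | succ k ih =>
      have h2 : 2 * (k+1) = (2*k) + 2 := by ring
      rw [h2]
      show ((2*k+1) * invCount (2*k)) * (Nat.factorial (k+1) * 2^(k+1)) = Nat.factorial (2*k+2)
      rw [Nat.factorial_succ, Nat.factorial_succ, Nat.factorial_succ, pow_succ, ← ih]
      ring

/-- The key arithmetic identity. -/
lemma arith_id (m k : ℕ) (hk : k ≤ m) :
    Nat.choose (m+k) (m-k) * invCount (2*k) =
      Nat.factorial (m+k) / (Nat.factorial k * Nat.factorial (m-k) * 2^k) := by
  have h1 : Nat.choose (m+k) (m-k) * Nat.factorial (m-k) * Nat.factorial (2*k) = Nat.factorial (m+k) := by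
    have h := Nat.choose_mul_factorial_mul_factorial (show m - k ≤ m + k from le_trans (Nat.sub_le m k) (Nat.le_add_right m k))
    have : m + k - (m - k) = 2*k := by omega
    rw [this] at h
    exact h
  symm
  apply Nat.div_eq_of_eq_mul_left
  · positivity
  · rw [← h1, ← invCount_mul k]
    ring

lemma count_fpf_ext {α : Type*} [Fintype α] [DecidableEq α] :
    ∀ N : ℕ, ∀ (s : Finset α) (g : Equiv.Perm α), s.card = N →
    (g * g = 1) → (∀ i ∈ s, g i = i) → (∀ i ∉ s, g i ∉ s ∧ g i ≠ i) →
    (Finset.univ.filter (fun σ : Equiv.Perm α =>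
        σ * σ = 1 ∧ (∀ i, σ i ≠ i) ∧ ∀ i ∉ s, σ i = g i)).card = invCount N := by
  intro N
  induction N using Nat.strong_induction_on with
  | _ N ih =>
  intro s g hcard hg2 hgs hgc
  rcases Nat.eq_zero_or_pos N with hN | hN
  · -- s empty, σ = g
    subst hN
    rw [Finset.card_eq_zero] at hcard
    subst hcard
    have : (Finset.univ.filter (fun σ : Equiv.Perm α =>
        σ * σ = 1 ∧ (∀ i, σ i ≠ i) ∧ ∀ i ∉ (∅ : Finset α), σ i = g i)) = {g} := by
      ext σ
      simp only [Finset.mem_filter, Finset.mem_univ, true_and, Finset.mem_singleton,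
        Finset.notMem_empty, not_false_iff, forall_true_left]
      constructor
      · rintro ⟨-, -, h⟩; exact Equiv.ext h
      · rintro rfl
        exact ⟨hg2, fun i => (hgc i (Finset.notMem_empty i)).2, fun i => rfl⟩
    rw [this]; simp [invCount]
  · -- pick v ∈ s
    obtain ⟨v, hv⟩ := Finset.card_pos.1 (hcard ▸ hN)
    set A := (Finset.univ.filter (fun σ : Equiv.Perm α =>
        σ * σ = 1 ∧ (∀ i, σ i ≠ i) ∧ ∀ i ∉ s, σ i = g i)) with hA
    have hfib : A.card = ∑ w ∈ (Finset.univ : Finset α), (A.filter (fun σ => σ v = w)).card := by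
      apply Finset.card_eq_sum_card_fiberwise
      intro σ _; exact Finset.mem_univ _
    -- fibers outside s.erase v are empty
    have hzero : ∀ w ∈ (Finset.univ : Finset α), w ∉ s.erase v →
        (A.filter (fun σ => σ v = w)).card = 0 := by
      intro w _ hw
      rw [Finset.card_eq_zero, Finset.eq_empty_iff_forall_notMem]
      intro σ hσ
      simp only [hA, Finset.mem_filter, Finset.mem_univ, true_and] at hσ
      obtain ⟨⟨h2, hf, hc⟩, hvw⟩ := hσ
      have hσσ : ∀ x, σ (σ x) = x := by
        intro x
        have := Equiv.ext_iff.1 h2 x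
        simpa [Equiv.Perm.mul_apply] using this
      rw [Finset.mem_erase] at hw
      push_neg at hw
      by_cases hws : w ∈ s
      · have hwv : w = v := by
          by_contra h
          exact hw h hws
        rw [hwv] at hvw
        exact hf v hvw
      · have h1 : σ w = g w := hc w hws
        have h2' : σ w = v := by rw [← hvw, hσσ]
        have := (hgc w hws).1
        rw [h1] at h2'
        rw [h2'] at this
        exact this hv
    have hfib2 : A.card = ∑ w ∈ s.erase v, (A.filter (fun σ => σ v = w)).card := by
      rw [hfib]
      symm
      apply Finset.sum_subset (Finset.subset_univ _)
      intro w hw hw2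
      exact hzero w hw hw2
    -- each fiber has card invCount (N-2)
    have hfiber : ∀ w ∈ s.erase v, (A.filter (fun σ => σ v = w)).card = invCount (N - 2) := by
      intro w hw
      rw [Finset.mem_erase] at hw
      obtain ⟨hwv, hws⟩ := hw
      set s' : Finset α := (s.erase v).erase w with hs'
      set g' : Equiv.Perm α := g * Equiv.swap v w with hg'
      have hvw_ne : v ≠ w := fun h => hwv h.symm
      have hgv : g v = v := hgs v hv
      have hgw : g w = w := hgs w hws
      have hg'v : g' v = w := by simp [hg', Equiv.Perm.mul_apply, Equiv.swap_apply_left, hgw]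
      have hg'w : g' w = v := by simp [hg', Equiv.Perm.mul_apply, Equiv.swap_apply_right, hgv]
      have hg'other : ∀ i, i ≠ v → i ≠ w → g' i = g i := by
        intro i h1 h2
        simp [hg', Equiv.Perm.mul_apply, Equiv.swap_apply_of_ne_of_ne h1 h2]
      have hwmem : w ∈ s.erase v := Finset.mem_erase.2 ⟨hwv, hws⟩
      have hs'card : s'.card = N - 2 := by
        rw [hs', Finset.card_erase_of_mem hwmem, Finset.card_erase_of_mem hv, hcard]
        omega
      have hs'sub : s' ⊆ s := (Finset.erase_subset _ _).trans (Finset.erase_subset _ _)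
      have hvs' : v ∉ s' := by simp [hs']
      have hws' : w ∉ s' := by simp [hs']
      have hg'2 : g' * g' = 1 := by
        ext x
        simp only [Equiv.Perm.mul_apply, Equiv.Perm.one_apply]
        by_cases hx1 : x = v
        · rw [hx1]
          rw [show (g * Equiv.swap v w) v = w from hg'v, show (g * Equiv.swap v w) w = v from hg'w]
        · by_cases hx2 : x = w
          · rw [hx2]
            rw [show (g * Equiv.swap v w) w = v from hg'w, show (g * Equiv.swap v w) v = w from hg'v]
          · rw [show (g * Equiv.swap v w) x = g x from hg'other x hx1 hx2]
            have hgx1 : g x ≠ v := by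
              intro h
              have : g (g x) = g v := by rw [h]
              rw [hgv] at this
              have hgg : ∀ y, g (g y) = y := by
                intro y
                have := Equiv.ext_iff.1 hg2 y
                simpa [Equiv.Perm.mul_apply] using this
              rw [hgg] at this
              exact hx1 this
            have hgx2 : g x ≠ w := by
              intro h
              have : g (g x) = g w := by rw [h]
              rw [hgw] at this
              have hgg : ∀ y, g (g y) = y := by
                intro y
                have := Equiv.ext_iff.1 hg2 y
                simpa [Equiv.Perm.mul_apply] using this
              rw [hgg] at this
              exact hx2 this
            rw [hg'other _ hgx1 hgx2]
            have := Equiv.ext_iff.1 hg2 x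
            simpa [Equiv.Perm.mul_apply] using this
      have hg's : ∀ i ∈ s', g' i = i := by
        intro i hi
        have h1 : i ≠ v := fun h => hvs' (h ▸ hi)
        have h2 : i ≠ w := fun h => hws' (h ▸ hi)
        rw [hg'other i h1 h2]
        exact hgs i (hs'sub hi)
      have hg'c : ∀ i ∉ s', g' i ∉ s' ∧ g' i ≠ i := by
        intro i hi
        by_cases h1 : i = v
        · subst h1; rw [hg'v]; exact ⟨hws', fun h => hvw_ne h.symm⟩
        · by_cases h2 : i = w
          · subst h2; rw [hg'w]; exact ⟨hvs', hvw_ne⟩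
          · have his : i ∉ s := by
              intro h
              apply hi
              rw [hs']
              exact Finset.mem_erase.2 ⟨h2, Finset.mem_erase.2 ⟨h1, h⟩⟩
            rw [hg'other i h1 h2]
            obtain ⟨ha, hb⟩ := hgc i his
            exact ⟨fun h => ha (hs'sub h), hb⟩
      -- the fiber equals the filter set for (s', g')
      have hset : A.filter (fun σ => σ v = w) =
          Finset.univ.filter (fun σ : Equiv.Perm α =>
            σ * σ = 1 ∧ (∀ i, σ i ≠ i) ∧ ∀ i ∉ s', σ i = g' i) := by
        ext σ
        simp only [hA, Finset.mem_filter, Finset.mem_univ, true_and, and_assoc]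
        constructor
        · rintro ⟨h2, hf, hc, hvw⟩
          have hσσ : ∀ x, σ (σ x) = x := by
            intro x
            have := Equiv.ext_iff.1 h2 x
            simpa [Equiv.Perm.mul_apply] using this
          refine ⟨h2, hf, ?_⟩
          intro i hi
          by_cases h1 : i = v
          · subst h1; rw [hg'v]; exact hvw
          · by_cases hh2 : i = w
            · subst hh2; rw [hg'w, ← hvw, hσσ]
            · have his : i ∉ s := by
                intro h
                apply hi
                rw [hs']
                exact Finset.mem_erase.2 ⟨hh2, Finset.mem_erase.2 ⟨h1, h⟩⟩
              rw [hg'other i h1 hh2]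
              exact hc i his
        · rintro ⟨h2, hf, hc⟩
          refine ⟨h2, hf, ?_, ?_⟩
          · intro i hi
            have hi' : i ∉ s' := fun h => hi (hs'sub h)
            have h1 : i ≠ v := fun h => hi (h ▸ hv)
            have hh2 : i ≠ w := fun h => hi (h ▸ hws)
            rw [hc i hi', hg'other i h1 hh2]
          · have := hc v hvs'
            rw [hg'v] at this
            exact this
      rw [hset]
      exact ih (N - 2) (by omega) s' g' hs'card hg'2 hg's hg'c
    rw [hfib2, Finset.sum_congr rfl hfiber, Finset.sum_const, smul_eq_mul]
    rw [Finset.card_erase_of_mem hv, hcard]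
    -- (N-1) * invCount (N-2) = invCount N
    rcases N with _ | _ | N
    · omega
    · -- N = 1 : s.erase v card 0 → LHS 0 = invCount 1
      simp [invCount]
    · show (N + 2 - 1) * invCount (N + 2 - 2) = invCount (N + 2)
      simp [invCount]

/-- Number of `j`-subsets of `range N` with no two consecutive elements is `C(N+1-j, j)`. -/
lemma natCount : ∀ N j : ℕ,
    ((Finset.range N).powerset.filter (fun F => (∀ i ∈ F, i + 1 ∉ F) ∧ F.card = j)).card =
      Nat.choose (N + 1 - j) j := by
  intro N
  induction N using Nat.strong_induction_on with
  | _ N ih =>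
  intro j
  match N with
  | 0 =>
      rcases Nat.eq_zero_or_pos j with hj | hj
      · subst hj
        simp [Finset.filter_singleton]
      · rw [Nat.choose_eq_zero_of_lt (by omega)]
        rw [Finset.card_eq_zero, Finset.eq_empty_iff_forall_notMem]
        intro F hF
        simp only [Finset.mem_filter, Finset.mem_powerset, Finset.range_zero,
          Finset.subset_empty] at hF
        obtain ⟨rfl, -, hc⟩ := hF
        simp at hc
        omega
  | 1 =>
      match j with
      | 0 =>
          have h : ((Finset.range 1).powerset.filter
              (fun F => (∀ i ∈ F, i + 1 ∉ F) ∧ F.card = 0)) = {∅} := by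
            ext F
            simp only [Finset.mem_filter, Finset.mem_powerset, Finset.card_eq_zero,
              Finset.mem_singleton]
            constructor
            · rintro ⟨-, -, h⟩; exact h
            · rintro rfl; simp
          rw [h]; simp
      | 1 =>
          have h : ((Finset.range 1).powerset.filter
              (fun F => (∀ i ∈ F, i + 1 ∉ F) ∧ F.card = 1)) = {{0}} := by
            ext F
            simp only [Finset.mem_filter, Finset.mem_powerset, Finset.mem_singleton]
            constructor
            · rintro ⟨hsub, -, hc⟩
              rw [Finset.card_eq_one] at hc
              obtain ⟨x, rfl⟩ := hc
              have := hsub (Finset.mem_singleton_self x)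
              rw [Finset.mem_range] at this
              have : x = 0 := by omega
              rw [this]
            · rintro rfl
              refine ⟨?_, ?_, rfl⟩
              · intro x hx
                rw [Finset.mem_range]
                rw [Finset.mem_singleton] at hx
                omega
              · intro x hx
                rw [Finset.mem_singleton] at hx
                subst hx
                simp
          rw [h]
          simp
      | (j+2) =>
          rw [Nat.choose_eq_zero_of_lt (by omega)]
          rw [Finset.card_eq_zero, Finset.eq_empty_iff_forall_notMem]
          intro F hF
          simp only [Finset.mem_filter, Finset.mem_powerset] at hF
          obtain ⟨hsub, -, hc⟩ := hF
          have := Finset.card_le_card hsub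
          simp [hc] at this
  | (N+2) =>
      -- split on whether N+1 ∈ F
      set P : Finset ℕ → Prop := fun F => (∀ i ∈ F, i + 1 ∉ F) ∧ F.card = j with hP
      have hsplit : ((Finset.range (N+2)).powerset.filter P).card =
          (((Finset.range (N+2)).powerset.filter P).filter (fun F => N+1 ∈ F)).card +
          (((Finset.range (N+2)).powerset.filter P).filter (fun F => N+1 ∉ F)).card := by
        rw [Finset.card_filter_add_card_filter_not]
      have hpart1 : (((Finset.range (N+2)).powerset.filter P).filter (fun F => N+1 ∉ F)) =
          ((Finset.range (N+1)).powerset.filter P) := by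
        ext F
        simp only [Finset.mem_filter, Finset.mem_powerset]
        constructor
        · rintro ⟨⟨h1, h2⟩, h3⟩
          refine ⟨?_, h2⟩
          intro x hx
          have := h1 hx
          rw [Finset.mem_range] at this ⊢
          rcases Nat.lt_or_ge x (N+1) with h | h
          · exact h
          · exfalso; apply h3; have : x = N + 1 := by omega
            rwa [← this]
        · rintro ⟨h1, h2⟩
          refine ⟨⟨fun x hx => ?_, h2⟩, fun h => by
            have := h1 h; simp at this⟩
          have := h1 hx
          rw [Finset.mem_range] at this ⊢
          omega
      have hpart2 : (((Finset.range (N+2)).powerset.filter P).filter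
            (fun F => N+1 ∈ F)).card =
          (if j = 0 then 0 else
            ((Finset.range N).powerset.filter
              (fun F => (∀ i ∈ F, i + 1 ∉ F) ∧ F.card = j - 1)).card) := by
        rcases Nat.eq_zero_or_pos j with hj | hj
        · subst hj
          rw [if_pos rfl]
          rw [Finset.card_eq_zero, Finset.eq_empty_iff_forall_notMem]
          intro F hF
          simp only [Finset.mem_filter, Finset.mem_powerset, hP] at hF
          obtain ⟨⟨-, -, hc⟩, hm⟩ := hF
          rw [Finset.card_eq_zero] at hc
          subst hc
          simp at hm
        · rw [if_neg (by omega)]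
          apply Finset.card_bij (fun F _ => F.erase (N+1))
          · -- maps into target
            intro F hF
            simp only [Finset.mem_filter, Finset.mem_powerset, hP] at hF ⊢
            obtain ⟨⟨hsub, hnc, hc⟩, hm⟩ := hF
            refine ⟨?_, ?_, ?_⟩
            · intro x hx
              rw [Finset.mem_erase] at hx
              obtain ⟨hx1, hx2⟩ := hx
              have hxr := hsub hx2
              rw [Finset.mem_range] at hxr ⊢
              -- x ≤ N+1, x ≠ N+1, and x ≠ N since x ∈ F, N+1 ∈ F would violate nocons
              have hxN : x ≠ N := by
                intro h
                subst h
                exact hnc x hx2 (by simpa using hm)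
              omega
            · intro x hx
              rw [Finset.mem_erase] at hx
              rw [Finset.mem_erase]
              intro hcon
              exact hnc x hx.2 hcon.2
            · rw [Finset.card_erase_of_mem hm, hc]
          · -- injective
            intro F1 h1 F2 h2 heq
            simp only [Finset.mem_filter, hP] at h1 h2
            have e1 : F1 = insert (N+1) (F1.erase (N+1)) := by
              rw [Finset.insert_erase h1.2]
            have e2 : F2 = insert (N+1) (F2.erase (N+1)) := by
              rw [Finset.insert_erase h2.2]
            rw [e1, e2, heq]
          · -- surjective
            intro F' hF'
            simp only [Finset.mem_filter, Finset.mem_powerset] at hF'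
            obtain ⟨hsub, hnc, hc⟩ := hF'
            refine ⟨insert (N+1) F', ?_, ?_⟩
            · simp only [Finset.mem_filter, Finset.mem_powerset, hP]
              have hnotin : N + 1 ∉ F' := by
                intro h
                have := hsub h
                rw [Finset.mem_range] at this
                omega
              refine ⟨⟨?_, ?_, ?_⟩, Finset.mem_insert_self _ _⟩
              · intro x hx
                rcases Finset.mem_insert.1 hx with h | h
                · rw [Finset.mem_range]; omega
                · have := hsub h
                  rw [Finset.mem_range] at this ⊢
                  omega
              · intro x hx
                rcases Finset.mem_insert.1 hx with h | h
                · subst h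
                  intro hcon
                  rcases Finset.mem_insert.1 hcon with h' | h'
                  · omega
                  · have := hsub h'
                    rw [Finset.mem_range] at this
                    omega
                · intro hcon
                  rcases Finset.mem_insert.1 hcon with h' | h'
                  · have := hsub h
                    rw [Finset.mem_range] at this
                    omega
                  · exact hnc x h h'
              · rw [Finset.card_insert_of_notMem hnotin, hc]
                omega
            · rw [Finset.erase_insert]
              intro h
              have := hsub h
              rw [Finset.mem_range] at this
              omega
      rw [hsplit, hpart1, hpart2, ih (N+1) (by omega) j]
      rcases Nat.eq_zero_or_pos j with hj | hj
      · subst hj; simp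
      · rw [if_neg (by omega), ih N (by omega) (j-1)]
        -- C(N+1-(j-1), j-1) + C(N+2-j, j) = C(N+3-j, j)
        rcases le_or_gt j (N+2) with hle | hlt
        · obtain ⟨jj, rfl⟩ : ∃ jj, j = jj + 1 := ⟨j - 1, by omega⟩
          have h1 : N + 1 - (jj + 1 - 1) = N + 2 - (jj + 1) := by omega
          have h2 : N + 2 + 1 - (jj + 1) = (N + 2 - (jj + 1)) + 1 := by omega
          rw [h1, h2, Nat.choose_succ_succ' (N + 2 - (jj + 1)) jj]
          have h3 : N + 2 - (jj + 1) = N + 1 - jj := by omega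
          have h4 : jj + 1 - 1 = jj := by omega
          rw [h3, h4, Nat.add_comm]
        · rw [Nat.choose_eq_zero_of_lt (by omega), Nat.choose_eq_zero_of_lt (by omega),
            Nat.choose_eq_zero_of_lt (by omega)]

def good {n : ℕ} (F : Finset (Fin n)) : Prop :=
  ∀ i ∈ F, (i : ℕ) + 1 < n ∧ ∀ j ∈ F, (j : ℕ) ≠ (i : ℕ) + 1

instance {n : ℕ} (F : Finset (Fin n)) : Decidable (good F) := by
  unfold good; infer_instance

lemma goodCount (n j : ℕ) (hn : 1 ≤ n) :
    ((Finset.univ : Finset (Finset (Fin n))).filter (fun F => good F ∧ F.card = j)).card =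
      Nat.choose (n - j) j := by
  have key : ((Finset.univ : Finset (Finset (Fin n))).filter (fun F => good F ∧ F.card = j)).card
      = ((Finset.range (n-1)).powerset.filter
          (fun F => (∀ i ∈ F, i + 1 ∉ F) ∧ F.card = j)).card := by
    apply Finset.card_bij (fun F _ => F.image (Fin.val))
    · intro F hF
      simp only [Finset.mem_filter, Finset.mem_univ, true_and] at hF
      obtain ⟨hg, hc⟩ := hF
      simp only [Finset.mem_filter, Finset.mem_powerset]
      refine ⟨?_, ?_, ?_⟩
      · intro x hx
        rw [Finset.mem_image] at hx
        obtain ⟨i, hi, rfl⟩ := hx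
        rw [Finset.mem_range]
        have := (hg i hi).1
        omega
      · intro x hx hx1
        rw [Finset.mem_image] at hx hx1
        obtain ⟨i, hi, rfl⟩ := hx
        obtain ⟨i2, hi2, he⟩ := hx1
        exact (hg i hi).2 i2 hi2 he
      · rw [Finset.card_image_of_injective _ Fin.val_injective, hc]
    · intro F1 h1 F2 h2 heq
      exact Finset.image_injective Fin.val_injective heq
    · intro F' hF'
      simp only [Finset.mem_filter, Finset.mem_powerset] at hF'
      obtain ⟨hsub, hnc, hc⟩ := hF'
      have hlt : ∀ x ∈ F', x < n := by
        intro x hx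
        have := hsub hx
        rw [Finset.mem_range] at this
        omega
      refine ⟨F'.attachFin hlt, ?_, ?_⟩
      · simp only [Finset.mem_filter, Finset.mem_univ, true_and]
        constructor
        · intro i hi
          rw [Finset.mem_attachFin] at hi
          constructor
          · have := hsub hi
            rw [Finset.mem_range] at this
            omega
          · intro k hk he
            rw [Finset.mem_attachFin] at hk
            exact hnc (i : ℕ) hi (he ▸ hk)
        · rw [Finset.card_attachFin, hc]
      · ext x
        simp only [Finset.mem_image, Finset.mem_attachFin]
        constructor
        · rintro ⟨i, hi, rfl⟩; exact hi
        · intro hx; exact ⟨⟨x, hlt x hx⟩, hx, rfl⟩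
  rw [key, natCount]
  congr 1
  omega

set_option maxHeartbeats 2000000 in
lemma count_good {n : ℕ} (F : Finset (Fin n)) (hF : good F) :
    (Finset.univ.filter (fun σ : Equiv.Perm (Fin n) =>
        σ * σ = 1 ∧ (∀ i, σ i ≠ i) ∧ ∀ i ∈ F, (σ i : ℕ) = (i : ℕ) + 1)).card =
      invCount (n - 2 * F.card) := by
  classical
  -- the involution g
  set gf : Fin n → Fin n := fun i =>
    if h : i ∈ F then ⟨(i : ℕ) + 1, (hF i h).1⟩
    else if h2 : ∃ j ∈ F, (j : ℕ) + 1 = (i : ℕ) then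
      ⟨(i : ℕ) - 1, Nat.lt_of_le_of_lt (Nat.sub_le _ _) i.isLt⟩
    else i with hgf
  have hgfF : ∀ i (h : i ∈ F), gf i = ⟨(i : ℕ) + 1, (hF i h).1⟩ := by
    intro i h; simp [hgf, h]
  have hgfsucc : ∀ (i j : Fin n), j ∈ F → (j : ℕ) + 1 = (i : ℕ) → gf i = j := by
    intro i j hj hji
    have hiF : i ∉ F := by
      intro h
      exact (hF j hj).2 i h (by omega)
    have h2 : ∃ j ∈ F, (j : ℕ) + 1 = (i : ℕ) := ⟨j, hj, hji⟩
    have : gf i = ⟨(i : ℕ) - 1, Nat.lt_of_le_of_lt (Nat.sub_le _ _) i.isLt⟩ := by simp [hgf, hiF, h2]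
    rw [this]
    apply Fin.ext
    simp
    omega
  have hgfid : ∀ i, i ∉ F → (¬∃ j ∈ F, (j : ℕ) + 1 = (i : ℕ)) → gf i = i := by
    intro i h1 h2; simp [hgf, h1, h2]
  have hinv : Function.Involutive gf := by
    intro i
    by_cases h : i ∈ F
    · rw [hgfF i h]
      exact hgfsucc _ i h rfl
    · by_cases h2 : ∃ j ∈ F, (j : ℕ) + 1 = (i : ℕ)
      · obtain ⟨j, hj, hji⟩ := h2
        rw [hgfsucc i j hj hji, hgfF j hj]
        apply Fin.ext
        simp [hji]
      · rw [hgfid i h h2, hgfid i h h2]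
  set g : Equiv.Perm (Fin n) := hinv.toPerm with hg
  have hgapp : ∀ i, g i = gf i := fun i => rfl
  set covered : Finset (Fin n) := F ∪ F.image g with hcov
  set s : Finset (Fin n) := Finset.univ \ covered with hs
  have hdisj : Disjoint F (F.image g) := by
    rw [Finset.disjoint_right]
    intro x hx hxF
    rw [Finset.mem_image] at hx
    obtain ⟨i, hi, rfl⟩ := hx
    rw [hgapp, hgfF i hi] at hxF
    exact (hF i hi).2 _ hxF rfl
  have hmemcov : ∀ x, x ∈ covered ↔ x ∈ F ∨ ∃ j ∈ F, (j : ℕ) + 1 = (x : ℕ) := by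
    intro x
    rw [hcov, Finset.mem_union, Finset.mem_image]
    constructor
    · rintro (h | ⟨i, hi, rfl⟩)
      · exact Or.inl h
      · right
        refine ⟨i, hi, ?_⟩
        rw [hgapp, hgfF i hi]
    · rintro (h | ⟨j, hj, hji⟩)
      · exact Or.inl h
      · right
        refine ⟨j, hj, ?_⟩
        rw [hgapp, hgfF j hj]
        exact Fin.ext (by simp [hji])
  have hscard : s.card = n - 2 * F.card := by
    rw [hs, Finset.card_sdiff_of_subset (Finset.subset_univ _), Finset.card_univ, Fintype.card_fin,
      hcov, Finset.card_union_of_disjoint hdisj,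
      Finset.card_image_of_injective _ g.injective]
    omega
  have hg2 : g * g = 1 := by
    ext x
    have hx : g (g x) = x := by rw [hgapp, hgapp]; exact hinv x
    simp [Equiv.Perm.mul_apply, hx]
  have hgs : ∀ i ∈ s, g i = i := by
    intro i hi
    rw [hs, Finset.mem_sdiff] at hi
    have := hi.2
    rw [hmemcov] at this
    push_neg at this
    rw [hgapp]
    exact hgfid i this.1 (by push_neg; exact this.2)
  have hgc : ∀ i ∉ s, g i ∉ s ∧ g i ≠ i := by
    intro i hi
    rw [hs, Finset.mem_sdiff] at hi
    push_neg at hi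
    have hic : i ∈ covered := hi (Finset.mem_univ i)
    rw [hmemcov] at hic
    rcases hic with h | ⟨j, hj, hji⟩
    · constructor
      · rw [hs, Finset.mem_sdiff]
        push_neg
        intro _
        rw [hmemcov]
        right
        refine ⟨i, h, ?_⟩
        rw [hgapp, hgfF i h]
      · rw [hgapp, hgfF i h]
        intro hcon
        have := congrArg Fin.val hcon
        simp at this
    · have hgi : g i = j := by rw [hgapp]; exact hgfsucc i j hj hji
      constructor
      · rw [hgi, hs, Finset.mem_sdiff]
        push_neg
        intro _
        rw [hmemcov]
        exact Or.inl hj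
      · rw [hgi]
        intro hcon
        rw [hcon] at hji
        omega
  have hsetEq : (Finset.univ.filter (fun σ : Equiv.Perm (Fin n) =>
        σ * σ = 1 ∧ (∀ i, σ i ≠ i) ∧ ∀ i ∈ F, (σ i : ℕ) = (i : ℕ) + 1)) =
      (Finset.univ.filter (fun σ : Equiv.Perm (Fin n) =>
        σ * σ = 1 ∧ (∀ i, σ i ≠ i) ∧ ∀ i ∉ s, σ i = g i)) := by
    ext σ
    simp only [Finset.mem_filter, Finset.mem_univ, true_and]
    constructor
    · rintro ⟨h2, hf, hP⟩
      have hσσ : ∀ x, σ (σ x) = x := by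
        intro x
        have := Equiv.ext_iff.1 h2 x
        simpa [Equiv.Perm.mul_apply] using this
      refine ⟨h2, hf, ?_⟩
      intro i hi
      rw [hs, Finset.mem_sdiff] at hi
      push_neg at hi
      have hic : i ∈ covered := hi (Finset.mem_univ i)
      rw [hmemcov] at hic
      rcases hic with h | ⟨j, hj, hji⟩
      · rw [hgapp, hgfF i h]
        exact Fin.ext (by simpa using hP i h)
      · have hσj : σ j = i := by
          apply Fin.ext
          rw [hP j hj]
          exact hji
        rw [hgapp, hgfsucc i j hj hji, ← hσj, hσσ]
    · rintro ⟨h2, hf, hc⟩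
      refine ⟨h2, hf, ?_⟩
      intro i hi
      have : i ∉ s := by
        rw [hs, Finset.mem_sdiff]
        push_neg
        intro _
        rw [hmemcov]
        exact Or.inl hi
      rw [hc i this, hgapp, hgfF i hi]
  rw [hsetEq]
  have hfin := count_fpf_ext (n - 2 * F.card) s g hscard hg2 hgs hgc
  convert hfin using 2
  ext σ
  simp only [Finset.mem_filter]

lemma count_bad {n : ℕ} (F : Finset (Fin n)) (hF : ¬ good F) :
    (Finset.univ.filter (fun σ : Equiv.Perm (Fin n) =>
        σ * σ = 1 ∧ (∀ i, σ i ≠ i) ∧ ∀ i ∈ F, (σ i : ℕ) = (i : ℕ) + 1)).card = 0 := by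
  rw [Finset.card_eq_zero, Finset.eq_empty_iff_forall_notMem]
  intro σ hσ
  simp only [Finset.mem_filter, Finset.mem_univ, true_and] at hσ
  obtain ⟨h2, hf, hP⟩ := hσ
  have hσσ : ∀ x, σ (σ x) = x := by
    intro x
    have := Equiv.ext_iff.1 h2 x
    simpa [Equiv.Perm.mul_apply] using this
  apply hF
  intro i hi
  constructor
  · have := hP i hi
    have h2' := (σ i).isLt
    omega
  · intro j hj hcon
    have hσi : σ i = j := Fin.ext (by rw [hP i hi]; omega)
    have : σ j = i := by rw [← hσi, hσσ]
    have := hP j hj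
    rw [‹σ j = i›] at this
    omega

lemma orbcard {n : ℕ} (σ : Equiv.Perm (Fin n)) (h2 : σ * σ = 1) (hf : ∀ i, σ i ≠ i) :
    2 * (Finset.univ.filter (fun i => i < σ i)).card = n := by
  have hσσ : ∀ x, σ (σ x) = x := by
    intro x
    have := Equiv.ext_iff.1 h2 x
    simpa [Equiv.Perm.mul_apply] using this
  have hbij : (Finset.univ.filter (fun i => i < σ i)).card =
      (Finset.univ.filter (fun i => σ i < i)).card := by
    apply Finset.card_bij (fun i _ => σ i)
    · intro i hi
      simp only [Finset.mem_filter, Finset.mem_univ, true_and] at hi ⊢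
      rw [hσσ]
      exact hi
    · intro i _ j _ hij
      exact σ.injective hij
    · intro j hj
      simp only [Finset.mem_filter, Finset.mem_univ, true_and] at hj ⊢
      exact ⟨σ j, by rw [hσσ]; exact hj, hσσ j⟩
  have hunion : (Finset.univ.filter (fun i => i < σ i)) ∪
      (Finset.univ.filter (fun i => σ i < i)) = Finset.univ := by
    ext i
    simp only [Finset.mem_union, Finset.mem_filter, Finset.mem_univ, true_and, iff_true]
    rcases lt_trichotomy i (σ i) with h | h | h
    · exact Or.inl h
    · exact absurd h.symm (hf i)
    · exact Or.inr h
  have hdisj : Disjoint (Finset.univ.filter (fun i => i < σ i))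
      (Finset.univ.filter (fun i => σ i < i)) := by
    rw [Finset.disjoint_left]
    intro i hi hi2
    simp only [Finset.mem_filter, Finset.mem_univ, true_and] at hi hi2
    exact absurd (hi.trans hi2) (lt_irrefl i)
  have := Finset.card_union_of_disjoint hdisj
  rw [hunion, Finset.card_univ, Fintype.card_fin, ← hbij] at this
  omega

set_option maxHeartbeats 4000000 in
/-- For a commutative ring `R`, `a b ∈ R` and `m ≥ 1`,
`Hf(T_{a,b}) = Σ_{k=0}^{m} (a-b)^{m-k} · b^k · (m+k)!/(k!·(m-k)!·2^k)`. -/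
theorem hafnian_toeplitzAB {R : Type*} [CommRing R] (m : ℕ) (hm : 0 < m) (a b : R) :
    hafnian (toeplitzAB (2 * m) a b) =
      ∑ k ∈ Finset.range (m + 1),
        (a - b) ^ (m - k) * b ^ k *
          ((Nat.factorial (m + k) /
            (Nat.factorial k * Nat.factorial (m - k) * 2 ^ k) : ℕ) : R) := by
  set n := 2 * m with hn
  set e : Equiv.Perm (Fin n) → Fin n → R :=
    fun σ i => if ((σ i : ℕ) = (i : ℕ) + 1) then a - b else 0 with he
  set I : Finset (Equiv.Perm (Fin n)) := Finset.univ.filter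
      (fun σ : Equiv.Perm (Fin n) => σ * σ = 1 ∧ ∀ i, σ i ≠ i) with hI
  -- Step B: entries
  have hentry : ∀ σ : Equiv.Perm (Fin n), ∀ i : Fin n, i < σ i →
      toeplitzAB n a b i (σ i) = e σ i + b := by
    intro σ i hi
    have hne : i ≠ σ i := ne_of_lt hi
    have hlt : (i : ℕ) < (σ i : ℕ) := hi
    rw [toeplitzAB, he]
    simp only []
    rw [if_neg hne]
    by_cases hadj : (i : ℕ) + 1 = (σ i : ℕ)
    · rw [if_pos (Or.inl hadj), if_pos hadj.symm]
      ring
    · have : ¬ ((i : ℕ) + 1 = (σ i : ℕ) ∨ ((σ i : ℕ) + 1 = (i : ℕ))) := by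
        push_neg
        exact ⟨hadj, by omega⟩
      rw [if_neg this, if_neg (fun h => hadj h.symm)]
      ring
  -- Step A: orbits
  have horb : ∀ σ ∈ I, (Finset.univ.filter (fun i => i < σ i)).card = m := by
    intro σ hσ
    rw [hI, Finset.mem_filter] at hσ
    have := orbcard σ hσ.2.1 hσ.2.2
    omega
  have e1 : hafnian (toeplitzAB n a b) =
      ∑ σ ∈ I, ∑ t ∈ (Finset.univ : Finset (Finset (Fin n))),
        (if (∀ i ∈ t, (σ i : ℕ) = (i : ℕ) + 1) then
            (a - b) ^ t.card * b ^ (m - t.card) else 0) := by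
    rw [hafnian]
    apply Finset.sum_congr
    · ext σ
      simp [hI, Finset.mem_filter]
    · intro σ hσ
      rw [hI, Finset.mem_filter] at hσ
      have hσI : σ ∈ I := by rw [hI, Finset.mem_filter]; exact hσ
      -- product expansion
      have h1 : ∀ i ∈ Finset.univ.filter (fun i : Fin n => i < σ i),
          toeplitzAB n a b i (σ i) = e σ i + b := by
        intro i hi
        rw [Finset.mem_filter] at hi
        exact hentry σ i hi.2
      rw [Finset.prod_congr rfl h1, Finset.prod_add]
      have step : ∀ t ∈ (Finset.univ.filter (fun i : Fin n => i < σ i)).powerset,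
          ((∏ i ∈ t, e σ i) *
            ∏ _i ∈ (Finset.univ.filter (fun i : Fin n => i < σ i)) \ t, b)
          = (if (∀ i ∈ t, (σ i : ℕ) = (i : ℕ) + 1) then
              (a - b) ^ t.card * b ^ (m - t.card) else 0) := by
        intro t ht
        rw [Finset.mem_powerset] at ht
        rw [Finset.prod_const]
        have hcard : (Finset.univ.filter (fun i : Fin n => i < σ i) \ t).card = m - t.card := by
          rw [Finset.card_sdiff_of_subset ht, horb σ hσI]
        rw [hcard]
        by_cases hall : ∀ i ∈ t, (σ i : ℕ) = (i : ℕ) + 1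
        · rw [if_pos hall]
          have : ∏ i ∈ t, e σ i = (a - b) ^ t.card := by
            rw [← Finset.prod_const]
            apply Finset.prod_congr rfl
            intro i hi
            rw [he]
            simp only []
            rw [if_pos (hall i hi)]
          rw [this]
        · rw [if_neg hall]
          push_neg at hall
          obtain ⟨i, hi, hbad⟩ := hall
          have : ∏ i ∈ t, e σ i = 0 := by
            apply Finset.prod_eq_zero hi
            rw [he]
            simp only []
            rw [if_neg hbad]
          rw [this, zero_mul]
      rw [Finset.sum_congr rfl step]
      -- extend to all subsets
      apply Finset.sum_subset
      · intro t _
        exact Finset.mem_univ t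
      · intro t _ ht
        rw [Finset.mem_powerset] at ht
        rw [if_neg]
        intro hall
        apply ht
        intro i hi
        rw [Finset.mem_filter]
        refine ⟨Finset.mem_univ i, ?_⟩
        have := hall i hi
        rw [Fin.lt_def]
        omega
  rw [e1, Finset.sum_comm]
  -- inner sums: counts
  have hinner : ∀ t : Finset (Fin n),
      (∑ σ ∈ I, if (∀ i ∈ t, (σ i : ℕ) = (i : ℕ) + 1) then
            (a - b) ^ t.card * b ^ (m - t.card) else 0)
      = (if good t then invCount (n - 2 * t.card) else 0) •
          ((a - b) ^ t.card * b ^ (m - t.card)) := by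
    intro t
    rw [← Finset.sum_filter, Finset.sum_const]
    congr 1
    have hff : I.filter (fun σ => ∀ i ∈ t, (σ i : ℕ) = (i : ℕ) + 1)
        = Finset.univ.filter (fun σ : Equiv.Perm (Fin n) =>
            σ * σ = 1 ∧ (∀ i, σ i ≠ i) ∧ ∀ i ∈ t, (σ i : ℕ) = (i : ℕ) + 1) := by
      rw [hI, Finset.filter_filter]
      apply Finset.filter_congr
      intro σ _
      simp [and_assoc]
    rw [hff]
    by_cases hg : good t
    · rw [if_pos hg, count_good t hg]
    · rw [if_neg hg, count_bad t hg]
  rw [Finset.sum_congr rfl (fun t _ => hinner t)]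
  -- group by cardinality
  have hgroup : ∑ t ∈ (Finset.univ : Finset (Finset (Fin n))),
      (if good t then invCount (n - 2 * t.card) else 0) •
          ((a - b) ^ t.card * b ^ (m - t.card))
      = ∑ j ∈ Finset.range (n + 1),
          ∑ t ∈ (Finset.univ : Finset (Finset (Fin n))).filter (fun t => t.card = j),
            (if good t then invCount (n - 2 * t.card) else 0) •
              ((a - b) ^ t.card * b ^ (m - t.card)) := by
    symm
    apply Finset.sum_fiberwise_of_maps_to
    intro t _
    rw [Finset.mem_range]
    have h2 : t.card ≤ n := by simpa using Finset.card_le_univ t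
    omega
  rw [hgroup]
  have hinner2 : ∀ j ∈ Finset.range (n + 1),
      (∑ t ∈ (Finset.univ : Finset (Finset (Fin n))).filter (fun t => t.card = j),
        (if good t then invCount (n - 2 * t.card) else 0) •
          ((a - b) ^ t.card * b ^ (m - t.card)))
      = (Nat.choose (n - j) j * invCount (n - 2 * j)) •
          ((a - b) ^ j * b ^ (m - j)) := by
    intro j _
    have hstep : ∀ t ∈ (Finset.univ : Finset (Finset (Fin n))).filter (fun t => t.card = j),
        (if good t then invCount (n - 2 * t.card) else 0) •
          ((a - b) ^ t.card * b ^ (m - t.card))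
        = (if good t then invCount (n - 2 * j) else 0) • ((a - b) ^ j * b ^ (m - j)) := by
      intro t ht
      rw [Finset.mem_filter] at ht
      rw [ht.2]
    rw [Finset.sum_congr rfl hstep]
    simp only [ite_smul, zero_smul]
    rw [← Finset.sum_filter, Finset.sum_const, Finset.filter_filter, smul_smul]
    congr 2
    · have : (Finset.univ : Finset (Finset (Fin n))).filter (fun t => t.card = j ∧ good t)
          = (Finset.univ : Finset (Finset (Fin n))).filter (fun t => good t ∧ t.card = j) := by
        apply Finset.filter_congr
        intro t _
        simp [and_comm]
      rw [this, goodCount n j (by omega)]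
  rw [Finset.sum_congr rfl hinner2]
  -- drop j > m
  have hdrop : ∑ j ∈ Finset.range (n + 1),
      (Nat.choose (n - j) j * invCount (n - 2 * j)) • ((a - b) ^ j * b ^ (m - j))
      = ∑ j ∈ Finset.range (m + 1),
      (Nat.choose (n - j) j * invCount (n - 2 * j)) • ((a - b) ^ j * b ^ (m - j)) := by
    symm
    apply Finset.sum_subset
    · intro j hj
      rw [Finset.mem_range] at hj ⊢
      omega
    · intro j hj1 hj2
      rw [Finset.mem_range] at hj1 hj2
      have hjm : m < j := by omega
      have : Nat.choose (n - j) j = 0 := by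
        apply Nat.choose_eq_zero_of_lt
        omega
      rw [this, zero_mul, zero_smul]
  rw [hdrop]
  -- reflect
  rw [← Finset.sum_range_reflect]
  apply Finset.sum_congr rfl
  intro k hk
  rw [Finset.mem_range] at hk
  have hkm : k ≤ m := by omega
  have h1 : m + 1 - 1 - k = m - k := by omega
  rw [h1]
  have h2 : n - (m - k) = m + k := by omega
  have h3 : n - 2 * (m - k) = 2 * k := by omega
  have h4 : m - (m - k) = k := by omega
  rw [h2, h3, h4, arith_id m k hkm, nsmul_eq_mul]
  ring
end

section
/- Let m be a positive integer. The number of perfect matchings of the complement of the path graph P_{2m} (equivalently, the number of loopless linear chord diagrams with m chords, i.e., partitions of {1,…,2m} into m pairs none of which is a pair of consecutive integers) equals Σ_{k=0}^{m} (−1)^{m−k} · (m+k)!/(k!·(m−k)!·2^k), the sum being taken in the integers. -/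
/-!
The perfect matchings of the complement of `P_{2m}` are the pairings of the vertex set that avoid
every path edge. Inclusion–exclusion over the set `T` of path edges a pairing is forced to contain
counts them as `∑_T (-1)^|T| (2(m - |T|) - 1)!!`, where `T` runs over the matchings of the path,
since a pairing containing `T` is a pairing of the `2(m - |T|)` vertices `T` misses. A path on `N`
vertices has `C(N - j, j)` matchings with `j` edges, and the substitution `j = m - k` turns
`C(m + k, 2k) (2k - 1)!!` into `(m + k)! / (k! (m - k)! 2^k)`.
-/

open Finset
open scoped Nat

section Pairings

variable {α : Type*}

def IsPartialPairing (T : Finset (Sym2 α)) : Prop :=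
  (∀ e ∈ T, ¬ e.IsDiag) ∧ ∀ e ∈ T, ∀ f ∈ T, ∀ v ∈ e, v ∈ f → e = f

lemma IsPartialPairing.mono {T M : Finset (Sym2 α)} (hM : IsPartialPairing M) (hTM : T ⊆ M) :
    IsPartialPairing T :=
  ⟨fun e he => hM.1 e (hTM he), fun e he f hf => hM.2 e (hTM he) f (hTM hf)⟩

lemma isPartialPairing_singleton {a b : α} (hab : a ≠ b) : IsPartialPairing {s(a, b)} :=
  ⟨by simpa using hab, by simp⟩

variable [DecidableEq α] {s t : Finset α} {M T : Finset (Sym2 α)}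

def IsPairingOn (s : Finset α) (M : Finset (Sym2 α)) : Prop :=
  IsPartialPairing M ∧ M.biUnion Sym2.toFinset = s

open Classical in
noncomputable def pairings (s : Finset α) : Finset (Finset (Sym2 α)) :=
  {M ∈ s.sym2.powerset | IsPairingOn s M}

lemma IsPartialPairing.isPairingOn (hT : IsPartialPairing T) :
    IsPairingOn (T.biUnion Sym2.toFinset) T :=
  ⟨hT, rfl⟩

lemma IsPairingOn.mem_iff (hM : IsPairingOn s M) {v : α} : v ∈ s ↔ ∃ e ∈ M, v ∈ e := by
  simp [← hM.2]

lemma isPairingOn_iff :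
    IsPairingOn s M ↔
      (∀ e ∈ M, ¬ e.IsDiag ∧ ∀ v ∈ e, v ∈ s) ∧ ∀ v ∈ s, ∃! e, e ∈ M ∧ v ∈ e := by
  constructor
  · intro hM
    refine ⟨fun e he => ⟨hM.1.1 e he, fun v hv => hM.mem_iff.mpr ⟨e, he, hv⟩⟩, fun v hv => ?_⟩
    obtain ⟨e, he, hve⟩ := hM.mem_iff.mp hv
    exact ⟨e, ⟨he, hve⟩, fun f ⟨hf, hvf⟩ => hM.1.2 f hf e he v hvf hve⟩
  · rintro ⟨hedge, hvert⟩
    refine ⟨⟨fun e he => (hedge e he).1, fun e he f hf v hve hvf => ?_⟩, ?_⟩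
    · exact (hvert v ((hedge e he).2 v hve)).unique ⟨he, hve⟩ ⟨hf, hvf⟩
    · ext v
      simp only [mem_biUnion, Sym2.mem_toFinset]
      exact ⟨fun ⟨e, he, hve⟩ => (hedge e he).2 v hve,
        fun hv => (hvert v hv).exists.imp fun e he => ⟨he.1, he.2⟩⟩

lemma mem_pairings : M ∈ pairings s ↔ IsPairingOn s M := by
  classical
  rw [pairings, mem_filter, and_iff_right_iff_imp]
  exact fun h => mem_powerset.mpr fun e he =>
    mem_sym2_iff.mpr fun v hv => h.mem_iff.mpr ⟨e, he, hv⟩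

lemma IsPairingOn.card_eq (hM : IsPairingOn s M) : #s = 2 * #M := by
  rw [← hM.2, card_biUnion, sum_const_nat fun e he =>
    Sym2.card_toFinset_of_not_isDiag e (hM.1.1 e he), mul_comm]
  intro e he f hf hef
  exact disjoint_left.mpr fun v hve hvf =>
    hef (hM.1.2 e he f hf v (Sym2.mem_toFinset.mp hve) (Sym2.mem_toFinset.mp hvf))

lemma IsPairingOn.union (hM : IsPairingOn s M) (hT : IsPairingOn t T) (hst : Disjoint s t) :
    IsPairingOn (s ∪ t) (M ∪ T) := by
  have hcross : ∀ e ∈ M, ∀ f ∈ T, ∀ v ∈ e, v ∉ f := fun e he f hf v hve hvf =>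
    disjoint_left.mp hst (hM.mem_iff.mpr ⟨e, he, hve⟩) (hT.mem_iff.mpr ⟨f, hf, hvf⟩)
  refine ⟨⟨fun e he => ?_, fun e he f hf v hve hvf => ?_⟩, by rw [union_biUnion, hM.2, hT.2]⟩
  · rcases mem_union.mp he with he | he
    exacts [hM.1.1 e he, hT.1.1 e he]
  · rcases mem_union.mp he with he | he <;> rcases mem_union.mp hf with hf | hf
    · exact hM.1.2 e he f hf v hve hvf
    · exact absurd hvf (hcross e he f hf v hve)
    · exact absurd hve (hcross f hf e he v hvf)
    · exact hT.1.2 e he f hf v hve hvf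

lemma IsPairingOn.sdiff (hM : IsPairingOn s M) (hTM : T ⊆ M) :
    IsPairingOn (s \ T.biUnion Sym2.toFinset) (M \ T) := by
  refine ⟨hM.1.mono sdiff_subset, ?_⟩
  ext v
  simp only [mem_biUnion, mem_sdiff, Sym2.mem_toFinset, hM.mem_iff, not_exists, not_and]
  constructor
  · rintro ⟨e, ⟨he, heT⟩, hve⟩
    exact ⟨⟨e, he, hve⟩, fun f hf hvf => heT (hM.1.2 f (hTM hf) e he v hvf hve ▸ hf)⟩
  · rintro ⟨⟨e, he, hve⟩, hvT⟩
    exact ⟨e, ⟨he, fun heT => hvT e heT hve⟩, hve⟩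

lemma card_filter_superset_pairings (hT : IsPartialPairing T)
    (hTs : T.biUnion Sym2.toFinset ⊆ s) :
    #{M ∈ pairings s | T ⊆ M} = #(pairings (s \ T.biUnion Sym2.toFinset)) := by
  refine card_bij' (fun M _ => M \ T) (fun M _ => M ∪ T) (fun M hM => ?_) (fun M hM => ?_)
    (fun M hM => sdiff_union_of_subset (mem_filter.mp hM).2) (fun M hM => ?_)
  · obtain ⟨hM, hTM⟩ := mem_filter.mp hM
    exact mem_pairings.mpr ((mem_pairings.mp hM).sdiff hTM)
  · have := (mem_pairings.mp hM).union hT.isPairingOn sdiff_disjoint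
    rw [sdiff_union_of_subset hTs] at this
    exact mem_filter.mpr ⟨mem_pairings.mpr this, subset_union_right⟩
  · refine union_sdiff_cancel_right (disjoint_left.mpr fun e heM heT => ?_)
    obtain ⟨v, hv⟩ : ∃ v, v ∈ e := ⟨e.out.1, Sym2.out_fst_mem e⟩
    have := (mem_pairings.mp hM).mem_iff.mpr ⟨e, heM, hv⟩
    exact (mem_sdiff.mp this).2 (mem_biUnion.mpr ⟨e, heT, Sym2.mem_toFinset.mpr hv⟩)

lemma pairings_eq_biUnion {a : α} (ha : a ∈ s) :
    pairings s = (s.erase a).biUnion fun b => {M ∈ pairings s | s(a, b) ∈ M} := by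
  ext M
  simp only [mem_biUnion, mem_filter, mem_erase]
  refine ⟨fun hM => ?_, fun ⟨_, _, hM, _⟩ => hM⟩
  obtain ⟨e, he, hae⟩ := (mem_pairings.mp hM).mem_iff.mp ha
  obtain ⟨b, rfl⟩ := Sym2.mem_iff_exists.mp hae
  refine ⟨b, ⟨fun h => (mem_pairings.mp hM).1.1 _ he (by simp [h]), ?_⟩, hM, he⟩
  exact (mem_pairings.mp hM).mem_iff.mpr ⟨_, he, Sym2.mem_mk_right _ _⟩

lemma card_filter_mem_pairings {a b : α} (hab : a ≠ b) (hsub : {a, b} ⊆ s) :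
    #{M ∈ pairings s | s(a, b) ∈ M} = #(pairings (s \ {a, b})) := by
  have hsupp : ({s(a, b)} : Finset (Sym2 α)).biUnion Sym2.toFinset = {a, b} := by
    simp [Sym2.toFinset_mk_eq]
  simp_rw [← singleton_subset_iff (a := s(a, b))]
  rw [card_filter_superset_pairings (isPartialPairing_singleton hab) (hsupp ▸ hsub), hsupp]

theorem card_pairings {n : ℕ} (hs : #s = 2 * n) : #(pairings s) = (2 * n - 1)‼ := by
  induction n generalizing s with
  | zero =>
    have : pairings s = {∅} := by
      ext M
      rw [mem_pairings, mem_singleton]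
      refine ⟨fun hM => card_eq_zero.mp (by have := hM.card_eq; omega), ?_⟩
      rintro rfl
      exact ⟨⟨by simp, by simp⟩, by simpa using (card_eq_zero.mp hs).symm⟩
    simp [this]
  | succ n ih =>
    obtain ⟨a, ha⟩ : s.Nonempty := card_pos.mp (by omega)
    have hfiber : ∀ b ∈ s.erase a, #{M ∈ pairings s | s(a, b) ∈ M} = (2 * n - 1)‼ := by
      intro b hb
      obtain ⟨hba, hbs⟩ := mem_erase.mp hb
      have hsub : {a, b} ⊆ s := insert_subset ha (singleton_subset_iff.mpr hbs)
      rw [card_filter_mem_pairings (Ne.symm hba) hsub, ih]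
      rw [card_sdiff_of_subset hsub, hs, card_pair (Ne.symm hba)]
      omega
    rw [pairings_eq_biUnion ha, card_biUnion, sum_congr rfl hfiber, sum_const, card_erase_of_mem ha,
      hs, smul_eq_mul, show 2 * (n + 1) - 1 = 2 * n + 1 by omega, Nat.doubleFactorial_add_one]
    intro b _ b' _ hbb'
    refine disjoint_left.mpr fun M hM hM' => hbb' (Sym2.congr_right (a := a).mp ?_)
    exact (mem_pairings.mp (mem_filter.mp hM).1).1.2 _ (mem_filter.mp hM).2 _
      (mem_filter.mp hM').2 a (Sym2.mem_mk_left _ _) (Sym2.mem_mk_left _ _)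

end Pairings

theorem card_filter_disjoint_eq_sum_powerset {β : Type*} [DecidableEq β]
    (S : Finset (Finset β)) (P : Finset β) :
    (#{M ∈ S | Disjoint M P} : ℤ) = ∑ T ∈ P.powerset, (-1 : ℤ) ^ #T * #{M ∈ S | T ⊆ M} := by
  calc (#{M ∈ S | Disjoint M P} : ℤ)
      = ∑ M ∈ S, ∑ T ∈ (M ∩ P).powerset, (-1 : ℤ) ^ #T := by
        simp_rw [sum_powerset_neg_one_pow_card, ← disjoint_iff_inter_eq_empty]
        rw [sum_boole]
    _ = ∑ M ∈ S, ∑ T ∈ P.powerset, if T ⊆ M then (-1 : ℤ) ^ #T else 0 := by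
        refine sum_congr rfl fun M _ => ?_
        rw [← sum_filter]
        congr 1
        ext T
        simp only [mem_filter, mem_powerset, subset_inter_iff]
        tauto
    _ = ∑ T ∈ P.powerset, (-1 : ℤ) ^ #T * #{M ∈ S | T ⊆ M} := by
        rw [sum_comm]
        refine sum_congr rfl fun T _ => ?_
        rw [← sum_filter, sum_const, nsmul_eq_mul, mul_comm]

namespace SimpleGraph

variable {V : Type*} [Fintype V] [DecidableEq V] (G : SimpleGraph V) [DecidableRel G.Adj]

lemma natCard_perfectMatchings_compl :
    Nat.card {M : Finset (Sym2 V) // (∀ e ∈ M, e ∈ Gᶜ.edgeSet) ∧ ∀ v, ∃! e, e ∈ M ∧ v ∈ e} =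
      #{M ∈ pairings univ | Disjoint M G.edgeFinset} := by
  classical
  have hcompl : ∀ e : Sym2 V, e ∈ Gᶜ.edgeSet ↔ ¬ e.IsDiag ∧ e ∉ G.edgeSet := fun e => by
    induction e with
    | h u v => simp [compl_adj]
  rw [Nat.card_eq_fintype_card, Fintype.card_subtype]
  congr 1
  ext M
  simp only [mem_filter, mem_univ, true_and, mem_pairings, isPairingOn_iff, implies_true,
    and_true, forall_const, hcompl, Finset.disjoint_left, mem_edgeFinset, forall₂_and]
  tauto

open Classical in
theorem card_pairings_disjoint_edgeFinset {m : ℕ} (hV : Fintype.card V = 2 * m) :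
    (#{M ∈ pairings univ | Disjoint M G.edgeFinset} : ℤ) =
      ∑ j ∈ range (m + 1), (-1 : ℤ) ^ j *
        #{T ∈ G.edgeFinset.powerset | IsPartialPairing T ∧ #T = j} * (2 * (m - j) - 1)‼ := by
  have hterm : ∀ T ∈ G.edgeFinset.powerset, (-1 : ℤ) ^ #T * #{M ∈ pairings univ | T ⊆ M} =
      if IsPartialPairing T then (-1 : ℤ) ^ #T * (2 * (m - #T) - 1)‼ else 0 := by
    intro T _
    split_ifs with hT
    · rw [card_filter_superset_pairings hT (subset_univ _), card_pairings (n := m - #T)]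
      rw [card_sdiff_of_subset (subset_univ _), card_univ, hV, hT.isPairingOn.card_eq]
      omega
    · rw [filter_eq_empty_iff.mpr fun M hM hTM => hT ((mem_pairings.mp hM).1.mono hTM)]
      simp
  have hbound : ∀ T ∈ {T ∈ G.edgeFinset.powerset | IsPartialPairing T}, #T ∈ range (m + 1) := by
    intro T hT
    have := (mem_filter.mp hT).2.isPairingOn.card_eq
    have := card_le_univ (T.biUnion Sym2.toFinset)
    exact mem_range.mpr (by omega)
  rw [card_filter_disjoint_eq_sum_powerset, sum_congr rfl hterm, ← sum_filter,
    ← sum_fiberwise_of_maps_to hbound]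
  refine sum_congr rfl fun j _ => ?_
  rw [sum_congr rfl fun T hT => by rw [(mem_filter.mp hT).2], sum_const, filter_filter,
    nsmul_eq_mul]
  ring

end SimpleGraph

/-- `A` lists the lower ends `i` of `j` pairwise disjoint edges `s(i, i + 1)` of the path on `n`
vertices. -/
def sparseSubsets (n j : ℕ) : Finset (Finset ℕ) :=
  {A ∈ (range (n - 1)).powersetCard j | ∀ i ∈ A, i + 1 ∉ A}

lemma mem_sparseSubsets {n j : ℕ} {A : Finset ℕ} :
    A ∈ sparseSubsets n j ↔ (A ⊆ range (n - 1) ∧ #A = j) ∧ ∀ i ∈ A, i + 1 ∉ A := by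
  rw [sparseSubsets, mem_filter, mem_powersetCard]

lemma sparseSubsets_zero_right (n : ℕ) : sparseSubsets n 0 = {∅} := by
  ext A
  simp only [mem_sparseSubsets, card_eq_zero, mem_singleton]
  exact ⟨fun h => h.1.2, by rintro rfl; simp⟩

lemma sparseSubsets_add_two (n j : ℕ) :
    sparseSubsets (n + 2) (j + 1) =
      sparseSubsets (n + 1) (j + 1) ∪ (sparseSubsets n j).image (insert n) := by
  ext A
  simp only [mem_union, mem_image, mem_sparseSubsets, subset_iff, mem_range,
    Nat.add_sub_cancel]
  constructor
  · rintro ⟨⟨hA, hcard⟩, hsparse⟩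
    by_cases hn : n ∈ A
    · refine Or.inr ⟨A.erase n, ⟨⟨fun i hi => ?_, ?_⟩, ?_⟩, insert_erase hn⟩
      · obtain ⟨hin, hiA⟩ := mem_erase.mp hi
        have := hA hiA
        have : i + 1 ≠ n := fun h => hsparse i hiA (h ▸ hn)
        omega
      · rw [card_erase_of_mem hn, hcard, Nat.add_sub_cancel]
      · exact fun i hi hi1 => hsparse i (mem_of_mem_erase hi) (mem_of_mem_erase hi1)
    · refine Or.inl ⟨⟨fun i hi => ?_, hcard⟩, hsparse⟩
      have := hA hi
      have : i ≠ n := fun h => hn (h ▸ hi)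
      omega
  · rintro (⟨⟨hA, hcard⟩, hsparse⟩ | ⟨B, ⟨⟨hB, hcard⟩, hsparse⟩, rfl⟩)
    · exact ⟨⟨fun i hi => Nat.lt_succ_of_lt (hA hi), hcard⟩, hsparse⟩
    · have hnB : n ∉ B := fun h => by have := hB h; omega
      refine ⟨⟨fun i hi => ?_, by rw [card_insert_of_notMem hnB, hcard]⟩, fun i hi hi1 => ?_⟩
      · rcases mem_insert.mp hi with rfl | hi
        · omega
        · have := hB hi; omega
      · rcases mem_insert.mp hi with rfl | hi <;> rcases mem_insert.mp hi1 with h | h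
        · omega
        · have := hB h; omega
        · have := hB hi; omega
        · exact hsparse i hi h

lemma lt_of_mem_sparseSubsets {n j i : ℕ} {A : Finset ℕ} (hA : A ∈ sparseSubsets n j)
    (hi : i ∈ A) : i + 1 < n := by
  have := mem_range.mp ((mem_sparseSubsets.mp hA).1.1 hi)
  omega

lemma card_sparseSubsets_add_two (n j : ℕ) :
    #(sparseSubsets (n + 2) (j + 1)) = #(sparseSubsets (n + 1) (j + 1)) + #(sparseSubsets n j) := by
  have hn : ∀ {k C}, C ∈ sparseSubsets n k → n ∉ C := fun hC hn => by
    have := lt_of_mem_sparseSubsets hC hn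
    omega
  have hdisj : Disjoint (sparseSubsets (n + 1) (j + 1)) ((sparseSubsets n j).image (insert n)) :=
    disjoint_left.mpr fun A hA hA' => by
      obtain ⟨B, -, rfl⟩ := mem_image.mp hA'
      have := lt_of_mem_sparseSubsets hA (mem_insert_self n B)
      omega
  have hinj : Set.InjOn (insert n) (sparseSubsets n j : Set (Finset ℕ)) := fun B hB B' hB' h => by
    rw [← erase_insert (hn hB), h, erase_insert (hn hB')]
  rw [sparseSubsets_add_two, card_union_of_disjoint hdisj, card_image_of_injOn hinj]

theorem card_sparseSubsets (n j : ℕ) : #(sparseSubsets n j) = (n - j).choose j := by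
  induction n using Nat.strong_induction_on generalizing j with
  | _ n ih =>
    match n, j with
    | n, 0 => simp [sparseSubsets_zero_right]
    | 0, j + 1 | 1, j + 1 => simp [sparseSubsets]
    | n + 2, j + 1 =>
      rw [card_sparseSubsets_add_two, ih _ (by omega), ih _ (by omega)]
      rcases le_or_gt j n with hjn | hjn
      · rw [show n + 2 - (j + 1) = n - j + 1 by omega, show n + 1 - (j + 1) = n - j by omega,
          Nat.choose_succ_succ', add_comm]
      · simp [show n - j = 0 by omega, show n + 1 - (j + 1) = 0 by omega,
          show n + 2 - (j + 1) = 0 by omega, Nat.choose_eq_zero_of_lt (show 0 < j by omega)]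

namespace SimpleGraph

instance (N : ℕ) : DecidableRel (pathGraph N).Adj :=
  fun _ _ => decidable_of_iff' _ pathGraph_adj

variable {N : ℕ} {e : Sym2 (Fin N)} {T : Finset (Sym2 (Fin N))} {A : Finset ℕ}

lemma mem_iff_of_mem_edgeSet_pathGraph (he : e ∈ (pathGraph N).edgeSet) {w : Fin N} :
    w ∈ e ↔ w.val = e.inf.val ∨ w.val = e.inf.val + 1 := by
  induction e with
  | h u v =>
    rw [mem_edgeSet, pathGraph_adj] at he
    rcases he with he | he <;> simp [Sym2.mem_iff, Fin.ext_iff] <;> omega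

lemma inf_add_one_lt_of_mem_edgeSet_pathGraph (he : e ∈ (pathGraph N).edgeSet) :
    e.inf.val + 1 < N := by
  induction e with
  | h u v =>
    rw [mem_edgeSet, pathGraph_adj] at he
    rcases he with he | he <;> simp <;> omega

lemma exists_mem_edgeSet_pathGraph_inf_eq {i : ℕ} (hi : i + 1 < N) :
    ∃ e ∈ (pathGraph N).edgeSet, e.inf.val = i :=
  ⟨s(⟨i, by omega⟩, ⟨i + 1, hi⟩), by simp [pathGraph_adj], by simp⟩

lemma injOn_inf_edgeSet_pathGraph :
    Set.InjOn (fun e : Sym2 (Fin N) => e.inf.val) (pathGraph N).edgeSet :=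
  fun e he f hf hef => Sym2.ext fun w => by
    rw [mem_iff_of_mem_edgeSet_pathGraph he, mem_iff_of_mem_edgeSet_pathGraph hf,
      show e.inf.val = f.inf.val from hef]

lemma injOn_inf_of_subset_edgeFinset_pathGraph (hTP : T ⊆ (pathGraph N).edgeFinset) :
    Set.InjOn (fun e : Sym2 (Fin N) => e.inf.val) T :=
  injOn_inf_edgeSet_pathGraph.mono fun _ he => mem_edgeFinset.mp (hTP he)

lemma image_inf_mem_sparseSubsets (hTP : T ⊆ (pathGraph N).edgeFinset)
    (hT : IsPartialPairing T) : T.image (fun e => e.inf.val) ∈ sparseSubsets N #T := by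
  have hP : ∀ e ∈ T, e ∈ (pathGraph N).edgeSet := fun e he => mem_edgeFinset.mp (hTP he)
  refine mem_sparseSubsets.mpr ⟨⟨fun i hi => ?_,
    card_image_of_injOn (injOn_inf_of_subset_edgeFinset_pathGraph hTP)⟩, fun i hi hi1 => ?_⟩
  · obtain ⟨e, he, rfl⟩ := mem_image.mp hi
    have := inf_add_one_lt_of_mem_edgeSet_pathGraph (hP e he)
    exact mem_range.mpr (by omega)
  · obtain ⟨e, he, rfl⟩ := mem_image.mp hi
    obtain ⟨f, hf, hfe⟩ := mem_image.mp hi1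
    have hlt := inf_add_one_lt_of_mem_edgeSet_pathGraph (hP e he)
    have hwe : ⟨e.inf.val + 1, hlt⟩ ∈ e :=
      (mem_iff_of_mem_edgeSet_pathGraph (hP e he)).mpr (Or.inr rfl)
    have hwf : ⟨e.inf.val + 1, hlt⟩ ∈ f :=
      (mem_iff_of_mem_edgeSet_pathGraph (hP f hf)).mpr (Or.inl hfe.symm)
    have := hT.2 e he f hf _ hwe hwf
    subst this
    omega

lemma isPartialPairing_filter_inf_mem (hA : ∀ i ∈ A, i + 1 ∉ A) :
    IsPartialPairing {e ∈ (pathGraph N).edgeFinset | e.inf.val ∈ A} := by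
  refine ⟨fun e he => not_isDiag_of_mem_edgeSet _ (mem_edgeFinset.mp (mem_filter.mp he).1),
    fun e he f hf w hwe hwf => injOn_inf_of_subset_edgeFinset_pathGraph (filter_subset _ _)
      he hf ?_⟩
  obtain ⟨heP, heA⟩ := mem_filter.mp he
  obtain ⟨hfP, hfA⟩ := mem_filter.mp hf
  rw [mem_iff_of_mem_edgeSet_pathGraph (mem_edgeFinset.mp heP)] at hwe
  rw [mem_iff_of_mem_edgeSet_pathGraph (mem_edgeFinset.mp hfP)] at hwf
  by_contra hne
  rcases hwe with h | h <;> rcases hwf with h' | h'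
  · exact hne (h.symm.trans h')
  · exact hA _ hfA (by rwa [show f.inf.val + 1 = e.inf.val by omega])
  · exact hA _ heA (by rwa [show e.inf.val + 1 = f.inf.val by omega])
  · exact hne (by simp only; omega)

lemma image_inf_filter_inf_mem (hA : A ⊆ range (N - 1)) :
    {e ∈ (pathGraph N).edgeFinset | e.inf.val ∈ A}.image (fun e => e.inf.val) = A := by
  refine (image_subset_iff.mpr fun e he => (mem_filter.mp he).2).antisymm fun i hi => ?_
  have := mem_range.mp (hA hi)
  obtain ⟨e, he, rfl⟩ := exists_mem_edgeSet_pathGraph_inf_eq (N := N) (i := i) (by omega)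
  exact mem_image_of_mem _ (mem_filter.mpr ⟨mem_edgeFinset.mpr he, hi⟩)

lemma filter_inf_mem_image_inf (hTP : T ⊆ (pathGraph N).edgeFinset) :
    {e ∈ (pathGraph N).edgeFinset | e.inf.val ∈ T.image (fun e => e.inf.val)} = T := by
  ext e
  simp only [mem_filter, mem_image]
  refine ⟨fun ⟨heP, f, hf, hfe⟩ => ?_, fun he => ⟨hTP he, e, he, rfl⟩⟩
  rwa [← injOn_inf_edgeSet_pathGraph (mem_edgeFinset.mp (hTP hf)) (mem_edgeFinset.mp heP) hfe]

open Classical in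
theorem card_partialPairings_pathGraph (j : ℕ) :
    #{T ∈ (pathGraph N).edgeFinset.powerset | IsPartialPairing T ∧ #T = j} =
      (N - j).choose j := by
  rw [← card_sparseSubsets]
  refine card_nbij' (fun T => T.image fun e => e.inf.val)
    (fun A => {e ∈ (pathGraph N).edgeFinset | e.inf.val ∈ A}) (fun T hT => ?_) (fun A hA => ?_)
    (fun T hT => filter_inf_mem_image_inf (mem_powerset.mp (mem_filter.mp hT).1))
    (fun A hA => image_inf_filter_inf_mem (mem_sparseSubsets.mp hA).1.1)
  · obtain ⟨hTP, hpair, rfl⟩ := (mem_filter.mp hT).imp_left mem_powerset.mp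
    exact image_inf_mem_sparseSubsets hTP hpair
  · obtain ⟨⟨hsub, rfl⟩, hsparse⟩ := mem_sparseSubsets.mp hA
    refine mem_filter.mpr ⟨mem_powerset.mpr (filter_subset _ _),
      isPartialPairing_filter_inf_mem hsparse, ?_⟩
    rw [← card_image_of_injOn (injOn_inf_of_subset_edgeFinset_pathGraph (filter_subset _ _)),
      image_inf_filter_inf_mem hsub]

end SimpleGraph

lemma Nat.factorial_two_mul_eq_mul_doubleFactorial (k : ℕ) :
    (2 * k)! = 2 ^ k * k ! * (2 * k - 1)‼ := by
  cases k with
  | zero => rfl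
  | succ k =>
    rw [show 2 * (k + 1) = (2 * k + 1) + 1 by ring, Nat.factorial_eq_mul_doubleFactorial,
      ← Nat.doubleFactorial_two_mul]
    rfl

lemma Nat.factorial_div_eq_choose_mul_doubleFactorial {m k : ℕ} (hk : k ≤ m) :
    (m + k)! / (k ! * (m - k)! * 2 ^ k) = (m + k).choose (m - k) * (2 * k - 1)‼ := by
  refine Nat.div_eq_of_eq_mul_left (by positivity) ?_
  have := Nat.choose_mul_factorial_mul_factorial (n := m + k) (k := m - k) (by omega)
  rw [show m + k - (m - k) = 2 * k by omega, Nat.factorial_two_mul_eq_mul_doubleFactorial] at this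
  rw [← this]
  ring

theorem card_perfectMatchings_compl_pathGraph_general (m : ℕ) :
    (Nat.card {M : Finset (Sym2 (Fin (2 * m))) //
        (∀ e ∈ M, e ∈ ((SimpleGraph.pathGraph (2 * m))ᶜ).edgeSet) ∧
        (∀ v : Fin (2 * m), ∃! e, e ∈ M ∧ v ∈ e)} : ℤ) =
      ∑ k ∈ Finset.range (m + 1),
        (-1 : ℤ) ^ (m - k) *
          ((Nat.factorial (m + k) /
            (Nat.factorial k * Nat.factorial (m - k) * 2 ^ k) : ℕ) : ℤ) := by
  rw [SimpleGraph.natCard_perfectMatchings_compl,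
    SimpleGraph.card_pairings_disjoint_edgeFinset _ (Fintype.card_fin _), ← sum_range_reflect]
  refine sum_congr rfl fun k hk => ?_
  have hk : k ≤ m := Nat.lt_succ_iff.mp (mem_range.mp hk)
  rw [SimpleGraph.card_partialPairings_pathGraph,
    Nat.factorial_div_eq_choose_mul_doubleFactorial hk, show m + 1 - 1 - k = m - k by omega,
    show 2 * m - (m - k) = m + k by omega, show m - (m - k) = k by omega]
  push_cast
  ring

/-- For `m ≥ 1`, the number of perfect matchings of the complement of the
path graph `P_{2m}` (equivalently, loopless linear chord diagrams with `m` chords)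
equals `Σ_{k=0}^{m} (−1)^{m−k} · (m+k)!/(k!·(m−k)!·2^k)` in the integers. -/
theorem card_perfectMatchings_compl_pathGraph (m : ℕ) (hm : 0 < m) :
    (Nat.card {M : Finset (Sym2 (Fin (2 * m))) //
        (∀ e ∈ M, e ∈ ((SimpleGraph.pathGraph (2 * m))ᶜ).edgeSet) ∧
        (∀ v : Fin (2 * m), ∃! e, e ∈ M ∧ v ∈ e)} : ℤ) =
      ∑ k ∈ Finset.range (m + 1),
        (-1 : ℤ) ^ (m - k) *
          ((Nat.factorial (m + k) /
            (Nat.factorial k * Nat.factorial (m - k) * 2 ^ k) : ℕ) : ℤ) :=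
  card_perfectMatchings_compl_pathGraph_general m
end

section
/- Let m be a positive integer and 0 ≤ k ≤ m. Let U₁ be the (0,1)-matrix of order 2m whose entries at positions (i,j) with |i−j| = 1 equal 1 and all of whose other entries are zero. Then Σ_{α ∈ Q_{2k,2m}} Hf(U₁(α)) = C(m+k, m−k), where for α ∈ Q_{2m,2m} the hafnian of the empty matrix U₁(α) is taken to be 1. -/
/-- The `(0,1)`-matrix `U₁` of order `n`: entries `1` exactly at the positions `(i,j)`
with `|i - j| = 1`, and `0` elsewhere. -/
def U₁ (n : ℕ) : Matrix (Fin n) (Fin n) ℕ :=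
  fun i j => if (i : ℕ) + 1 = (j : ℕ) ∨ (j : ℕ) + 1 = (i : ℕ) then 1 else 0

open Finset Equiv

theorem hafnian_eq_card_of_isSymm_of_zero_or_one {ι R : Type*} [Fintype ι] [LinearOrder ι]
    [CommSemiring R] [DecidableEq R] {A : Matrix ι ι R} (hA : A.IsSymm)
    (h01 : ∀ i j, A i j = 0 ∨ A i j = 1) :
    hafnian A = #{σ : Perm ι | (σ * σ = 1 ∧ ∀ i, σ i ≠ i) ∧ ∀ i, A i (σ i) = 1} := by
  rw [← filter_filter, ← sum_boole, hafnian]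
  refine sum_congr rfl fun σ hσ => ?_
  obtain ⟨hσσ, hfix⟩ := (mem_filter.mp hσ).2
  split_ifs with hσA
  · exact prod_eq_one fun i _ => hσA i
  · obtain ⟨i, hi⟩ := not_forall.mp hσA
    have hσi : σ (σ i) = i := by rw [← Perm.mul_apply, hσσ, Perm.one_apply]
    have hzero : A i (σ i) = 0 := (h01 i (σ i)).resolve_right hi
    rcases (hfix i).lt_or_gt with h | h
    · refine prod_eq_zero (i := σ i) (by simp [hσi, h]) ?_
      rw [hσi, hA.apply, hzero]
    · exact prod_eq_zero (by simp [h]) hzero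

lemma card_union_image_succ {D : Finset ℕ} (hD : Disjoint D (D.image (· + 1))) :
    #(D ∪ D.image (· + 1)) = 2 * #D := by
  rw [card_union_of_disjoint hD, card_image_of_injective _ (add_left_injective 1), two_mul]

lemma disjoint_image_succ_iff {D : Finset ℕ} :
    Disjoint D (D.image (· + 1)) ↔ ∀ i ∈ D, i + 1 ∉ D := by
  simp only [disjoint_left, mem_image]
  grind

lemma lt_of_mem_union_image_succ {D : Finset ℕ} {n : ℕ} (hD : ∀ i ∈ D, i + 1 < n) :
    ∀ x ∈ D ∪ D.image (· + 1), x < n := by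
  simp only [mem_union, mem_image]
  rintro x (hx | ⟨i, hi, rfl⟩)
  · exact (Nat.lt_succ_self x).trans (hD x hx)
  · exact hD i hi

/-- `D` is the set of left ends of a tiling of `S` by dominoes `{i, i + 1}`. -/
def IsDominoTiling (S D : Finset ℕ) : Prop :=
  Disjoint D (D.image (· + 1)) ∧ D ∪ D.image (· + 1) = S

instance (S : Finset ℕ) : DecidablePred (IsDominoTiling S) := fun _ => instDecidableAnd

def partner (D : Finset ℕ) (x : ℕ) : ℕ := if x ∈ D then x + 1 else x - 1

namespace IsDominoTiling

variable {S D : Finset ℕ} {x : ℕ}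

lemma succ_notMem (hD : IsDominoTiling S D) (hx : x ∈ D) : x + 1 ∉ D :=
  fun h => disjoint_left.mp hD.1 h (mem_image_of_mem _ hx)

lemma pred_mem (hD : IsDominoTiling S D) (hxS : x ∈ S) (hxD : x ∉ D) : 0 < x ∧ x - 1 ∈ D := by
  rw [← hD.2, mem_union, mem_image] at hxS
  obtain ⟨y, hy, rfl⟩ := hxS.resolve_left hxD
  simpa using hy

lemma partner_mem (hD : IsDominoTiling S D) (hx : x ∈ S) : partner D x ∈ S := by
  rw [partner]
  split_ifs with hxD
  · exact hD.2 ▸ mem_union_right _ (mem_image_of_mem _ hxD)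
  · exact hD.2 ▸ mem_union_left _ (hD.pred_mem hx hxD).2

lemma partner_partner (hD : IsDominoTiling S D) (hx : x ∈ S) : partner D (partner D x) = x := by
  by_cases hxD : x ∈ D
  · simp [partner, hxD, hD.succ_notMem hxD]
  · obtain ⟨hpos, hpred⟩ := hD.pred_mem hx hxD
    rw [partner, partner, if_neg hxD, if_pos hpred]
    omega

lemma partner_adj (hD : IsDominoTiling S D) (hx : x ∈ S) :
    x + 1 = partner D x ∨ partner D x + 1 = x := by
  by_cases hxD : x ∈ D
  · simp [partner, hxD]
  · have := (hD.pred_mem hx hxD).1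
    rw [partner, if_neg hxD]
    omega

end IsDominoTiling

lemma succ_eq_partner_iff {D : Finset ℕ} {x : ℕ} : x + 1 = partner D x ↔ x ∈ D := by
  rw [partner]
  split_ifs with hxD
  · simpa using hxD
  · simp only [hxD, iff_false]
    omega

section AdjacentInvolution

variable {ι : Type*} (v : ι ↪ ℕ)

def IsAdjacentInvolution (σ : Perm ι) : Prop :=
  σ * σ = 1 ∧ ∀ i, v i + 1 = v (σ i) ∨ v (σ i) + 1 = v i

instance [Fintype ι] [DecidableEq ι] : DecidablePred (IsAdjacentInvolution v) :=
  fun _ => instDecidableAnd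

def leftEnds [Fintype ι] (σ : Perm ι) : Finset ℕ := ({i | v i + 1 = v (σ i)} : Finset ι).map v

variable {v}

lemma IsAdjacentInvolution.apply_apply {σ : Perm ι} (hσ : IsAdjacentInvolution v σ) (i : ι) :
    σ (σ i) = i := by
  rw [← Perm.mul_apply, hσ.1, Perm.one_apply]

variable [Fintype ι]

lemma mem_leftEnds {σ : Perm ι} {i : ι} : v i ∈ leftEnds v σ ↔ v i + 1 = v (σ i) := by
  simp [leftEnds]

lemma IsAdjacentInvolution.apply_eq_partner {σ : Perm ι} (hσ : IsAdjacentInvolution v σ)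
    (i : ι) : v (σ i) = partner (leftEnds v σ) (v i) := by
  rw [partner]
  split_ifs with hi
  · exact (mem_leftEnds.mp hi).symm
  · have := (hσ.2 i).resolve_left (mem_leftEnds.not.mp hi)
    omega

lemma IsAdjacentInvolution.isDominoTiling {σ : Perm ι} (hσ : IsAdjacentInvolution v σ) :
    IsDominoTiling (univ.map v) (leftEnds v σ) := by
  refine ⟨disjoint_left.mpr ?_, ?_⟩
  · simp only [leftEnds, mem_map, mem_filter, mem_univ, true_and, mem_image]
    rintro _ ⟨i, hi, rfl⟩ ⟨_, ⟨j, hj, rfl⟩, hji⟩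
    rw [hji, v.injective.eq_iff] at hj
    subst hj
    rw [hσ.apply_apply] at hi
    omega
  · ext x
    simp only [leftEnds, mem_union, mem_map, mem_filter, mem_univ, true_and, mem_image]
    constructor
    · rintro (⟨i, -, rfl⟩ | ⟨_, ⟨i, hi, rfl⟩, rfl⟩)
      · exact ⟨i, rfl⟩
      · exact ⟨σ i, hi.symm⟩
    · rintro ⟨i, rfl⟩
      refine (hσ.2 i).imp (fun hi => ⟨i, hi, rfl⟩) fun hi => ⟨v (σ i), ⟨σ i, ?_, rfl⟩, hi⟩
      rw [hσ.apply_apply, hi]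

lemma exists_isAdjacentInvolution_leftEnds_eq {D : Finset ℕ}
    (hD : IsDominoTiling (univ.map v) D) :
    ∃ σ, IsAdjacentInvolution v σ ∧ leftEnds v σ = D := by
  have hvS (i : ι) : v i ∈ univ.map v := mem_map_of_mem _ (mem_univ i)
  choose f hf using fun i => mem_map.mp (hD.partner_mem (hvS i))
  have hf' (i : ι) : v (f i) = partner D (v i) := (hf i).2
  have hinv : Function.Involutive f := fun i =>
    v.injective (by rw [hf', hf', hD.partner_partner (hvS i)])
  refine ⟨hinv.toPerm f, ⟨Perm.ext hinv, fun i => ?_⟩, ?_⟩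
  · simpa only [Function.Involutive.coe_toPerm, hf'] using hD.partner_adj (hvS i)
  · ext x
    simp only [leftEnds, mem_map, mem_filter, mem_univ, true_and, Function.Involutive.coe_toPerm,
      hf', succ_eq_partner_iff]
    constructor
    · rintro ⟨i, hi, rfl⟩
      exact hi
    · intro hx
      obtain ⟨i, -, rfl⟩ := mem_map.mp (hD.2 ▸ mem_union_left _ hx)
      exact ⟨i, hx, rfl⟩

theorem card_isAdjacentInvolution_eq_card_isDominoTiling [DecidableEq ι] :
    #{σ : Perm ι | IsAdjacentInvolution v σ} =
      #{D ∈ (univ.map v).powerset | IsDominoTiling (univ.map v) D} := by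
  refine card_nbij (leftEnds v) (fun σ hσ => ?_) (fun σ hσ τ hτ hστ => ?_) fun D hD => ?_
  · have hσ' := (mem_filter.mp hσ).2
    exact mem_filter.mpr ⟨mem_powerset.mpr (hσ'.isDominoTiling.2 ▸ subset_union_left),
      hσ'.isDominoTiling⟩
  · have hσ' := (mem_filter.mp hσ).2
    have hτ' := (mem_filter.mp hτ).2
    ext i
    apply v.injective
    rw [hσ'.apply_eq_partner, hτ'.apply_eq_partner, hστ]
  · obtain ⟨σ, hσ, rfl⟩ := exists_isAdjacentInvolution_leftEnds_eq (mem_filter.mp hD).2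
    exact ⟨σ, mem_filter.mpr ⟨mem_univ _, hσ⟩, rfl⟩

end AdjacentInvolution

/-- Left ends of the `d`-edge matchings of the path `0 - 1 - ⋯ - (n - 1)`. -/
def pathMatchings (n d : ℕ) : Finset (Finset ℕ) :=
  {D ∈ (range n).powersetCard d | ∀ i ∈ D, i + 1 ∉ D ∧ i + 1 < n}

@[simp]
lemma mem_pathMatchings {n d : ℕ} {D : Finset ℕ} :
    D ∈ pathMatchings n d ↔ #D = d ∧ ∀ i ∈ D, i + 1 ∉ D ∧ i + 1 < n := by
  simp only [pathMatchings, mem_filter, mem_powersetCard]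
  refine ⟨fun ⟨⟨_, hcard⟩, hD⟩ => ⟨hcard, hD⟩, fun ⟨hcard, hD⟩ => ⟨⟨fun i hi => ?_, hcard⟩, hD⟩⟩
  exact mem_range.mpr (by have := (hD i hi).2; omega)

lemma pathMatchings_zero_right (n : ℕ) : pathMatchings n 0 = {∅} := by
  ext D
  simp +contextual

lemma pathMatchings_succ_eq_empty {n : ℕ} (hn : n ≤ 1) (d : ℕ) : pathMatchings n (d + 1) = ∅ := by
  ext D
  simp only [mem_pathMatchings, notMem_empty, iff_false, not_and]
  intro hD hmatch
  obtain ⟨i, hi⟩ := card_pos.mp (by omega : 0 < #D)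
  have := (hmatch i hi).2
  omega

lemma filter_notMem_pathMatchings (n d : ℕ) :
    {D ∈ pathMatchings (n + 2) (d + 1) | n ∉ D} = pathMatchings (n + 1) (d + 1) := by
  ext D
  simp only [mem_filter, mem_pathMatchings]
  grind

lemma card_filter_mem_pathMatchings (n d : ℕ) :
    #{D ∈ pathMatchings (n + 2) (d + 1) | n ∈ D} = #(pathMatchings n d) := by
  refine card_nbij' (·.erase n) (insert n) (fun D hD => ?_) (fun D hD => ?_)
    (fun D hD => insert_erase (mem_filter.mp hD).2) (fun D hD => erase_insert ?_)
  · simp only [coe_filter, Set.mem_ofPred_eq, mem_pathMatchings] at hD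
    simp only [mem_coe, mem_pathMatchings]
    grind
  · simp only [mem_coe, mem_pathMatchings] at hD
    simp only [coe_filter, Set.mem_ofPred_eq, mem_pathMatchings]
    grind
  · simp only [mem_coe, mem_pathMatchings] at hD
    grind

lemma card_pathMatchings_add_two (n d : ℕ) :
    #(pathMatchings (n + 2) (d + 1)) = #(pathMatchings (n + 1) (d + 1)) + #(pathMatchings n d) := by
  rw [← card_filter_add_card_filter_not (n ∈ ·), filter_notMem_pathMatchings,
    card_filter_mem_pathMatchings, add_comm]

theorem card_pathMatchings : ∀ n d, #(pathMatchings n d) = (n - d).choose d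
  | n, 0 => by simp [pathMatchings_zero_right]
  | 0, d + 1 | 1, d + 1 => by simp [pathMatchings_succ_eq_empty]
  | n + 2, d + 1 => by
    rw [card_pathMatchings_add_two, card_pathMatchings (n + 1) (d + 1), card_pathMatchings n d]
    rcases le_or_gt d n with h | h
    · rw [show n + 2 - (d + 1) = n - d + 1 by omega, Nat.choose_succ_succ', add_comm,
        show n + 1 - (d + 1) = n - d by omega]
    · rw [show n + 2 - (d + 1) = 0 by omega, show n + 1 - (d + 1) = 0 by omega,
        show n - d = 0 by omega, Nat.choose_eq_zero_of_lt (by omega : 0 < d), add_zero]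

section Uncovered

variable {n : ℕ}

def uncovered (n : ℕ) (D : Finset ℕ) : Finset (Fin n) := {x | (x : ℕ) ∉ D ∪ D.image (· + 1)}

def complVal (α : Finset (Fin n)) : {x : Fin n // x ∉ α} ↪ ℕ :=
  (Function.Embedding.subtype _).trans Fin.valEmbedding

lemma mem_map_complVal {α : Finset (Fin n)} {x : ℕ} :
    x ∈ univ.map (complVal α) ↔ ∃ h : x < n, ⟨x, h⟩ ∉ α := by
  simp only [complVal, mem_map, mem_univ, true_and, Function.Embedding.trans_apply,
    Function.Embedding.coe_subtype, Fin.valEmbedding_apply]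
  exact ⟨fun ⟨a, ha⟩ => ha ▸ ⟨a.1.2, a.2⟩, fun ⟨h, hx⟩ => ⟨⟨⟨x, h⟩, hx⟩, rfl⟩⟩

lemma card_map_complVal (α : Finset (Fin n)) : #(univ.map (complVal α)) = n - #α := by
  rw [card_map, card_univ, Fintype.card_subtype_compl, Fintype.card_fin, Fintype.card_coe]

lemma uncovered_eq_iff {D : Finset ℕ} {α : Finset (Fin n)}
    (hD : ∀ x ∈ D ∪ D.image (· + 1), x < n) :
    uncovered n D = α ↔ D ∪ D.image (· + 1) = univ.map (complVal α) := by
  simp only [Finset.ext_iff, uncovered, mem_filter, mem_univ, true_and, mem_map_complVal]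
  constructor
  · intro h x
    exact ⟨fun hx => ⟨hD x hx, fun hxα => (h _).mpr hxα hx⟩,
      fun ⟨hxn, hxα⟩ => not_not.mp fun hx => hxα ((h ⟨x, hxn⟩).mp hx)⟩
  · intro h x
    simp [h]

lemma card_uncovered {D : Finset ℕ} {d : ℕ} (hD : D ∈ pathMatchings n d) :
    #(uncovered n D) = n - 2 * d := by
  obtain ⟨hcard, hmatch⟩ := mem_pathMatchings.mp hD
  have hlt := lt_of_mem_union_image_succ fun i hi => (hmatch i hi).2
  have hcompl : uncovered n D = ((D ∪ D.image (· + 1)).attachFin hlt)ᶜ := by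
    ext
    simp [uncovered]
  rw [hcompl, card_compl, Fintype.card_fin, card_attachFin,
    card_union_image_succ (disjoint_image_succ_iff.mpr fun i hi => (hmatch i hi).1), hcard]

lemma filter_uncovered_eq {d : ℕ} {α : Finset (Fin n)} (hα : #α + 2 * d = n) :
    {D ∈ pathMatchings n d | uncovered n D = α} =
      {D ∈ (univ.map (complVal α)).powerset | IsDominoTiling (univ.map (complVal α)) D} := by
  ext D
  simp only [mem_filter, mem_pathMatchings, mem_powerset]
  constructor
  · rintro ⟨⟨-, hmatch⟩, hunc⟩
    have hcover := (uncovered_eq_iff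
      (lt_of_mem_union_image_succ fun i hi => (hmatch i hi).2)).mp hunc
    exact ⟨hcover ▸ subset_union_left,
      disjoint_image_succ_iff.mpr fun i hi => (hmatch i hi).1, hcover⟩
  · rintro ⟨-, hdisj, hcover⟩
    have hcard : 2 * #D = 2 * d := by
      rw [← card_union_image_succ hdisj, hcover, card_map_complVal]
      omega
    have hlt (x) (hx : x ∈ D ∪ D.image (· + 1)) : x < n :=
      (mem_map_complVal.mp (hcover ▸ hx)).1
    refine ⟨⟨by omega, fun i hi => ⟨disjoint_image_succ_iff.mp hdisj i hi, ?_⟩⟩,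
      (uncovered_eq_iff hlt).mpr hcover⟩
    exact hlt _ (mem_union_right _ (mem_image_of_mem _ hi))

end Uncovered

lemma U₁_apply_eq_one_iff {n : ℕ} {i j : Fin n} :
    U₁ n i j = 1 ↔ (i : ℕ) + 1 = j ∨ (j : ℕ) + 1 = i := by
  unfold U₁
  split_ifs with h <;> simp [h]

lemma U₁_apply_eq_zero_or_one {n : ℕ} (i j : Fin n) : U₁ n i j = 0 ∨ U₁ n i j = 1 := by
  unfold U₁
  split_ifs <;> simp

lemma isSymm_U₁ (n : ℕ) : (U₁ n).IsSymm :=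
  Matrix.IsSymm.ext fun i j => by simp only [U₁, or_comm]

lemma isAdjacentInvolution_complVal_iff {n : ℕ} {α : Finset (Fin n)} {σ : Perm {x // x ∉ α}} :
    IsAdjacentInvolution (complVal α) σ ↔
      (σ * σ = 1 ∧ ∀ i, σ i ≠ i) ∧ ∀ i : {x // x ∉ α}, U₁ n i (σ i) = 1 := by
  simp only [IsAdjacentInvolution, U₁_apply_eq_one_iff]
  refine ⟨fun hσ => ⟨⟨hσ.1, fun i hi => ?_⟩, hσ.2⟩, fun hσ => ⟨hσ.1.1, hσ.2⟩⟩
  have := hσ.2 i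
  rw [hi] at this
  omega

lemma hafnian_U₁_submatrix_eq_card {n d : ℕ} {α : Finset (Fin n)} (hα : #α + 2 * d = n) :
    hafnian ((U₁ n).submatrix (fun i : {x // x ∉ α} => (i : Fin n)) (fun i => (i : Fin n))) =
      #{D ∈ pathMatchings n d | uncovered n D = α} := by
  rw [hafnian_eq_card_of_isSymm_of_zero_or_one ((isSymm_U₁ n).submatrix _)
      fun _ _ => U₁_apply_eq_zero_or_one _ _,
    Nat.cast_id, filter_uncovered_eq hα, ← card_isAdjacentInvolution_eq_card_isDominoTiling]
  exact congr_arg card (filter_congr fun σ _ => isAdjacentInvolution_complVal_iff.symm)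

theorem sum_hafnian_U₁_submatrix_general (m k : ℕ) (hk : k ≤ m) :
    ∑ α ∈ Finset.powersetCard (2 * k) (Finset.univ : Finset (Fin (2 * m))),
      hafnian ((U₁ (2 * m)).submatrix
        (fun i : {x : Fin (2 * m) // x ∉ α} => (i : Fin (2 * m)))
        (fun i : {x : Fin (2 * m) // x ∉ α} => (i : Fin (2 * m)))) =
      Nat.choose (m + k) (m - k) := by
  have hfiber (α) (hα : α ∈ powersetCard (2 * k) univ) :=
    hafnian_U₁_submatrix_eq_card (n := 2 * m) (d := m - k) (α := α) <| by
      rw [(mem_powersetCard.mp hα).2]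
      omega
  rw [sum_congr rfl hfiber, ← card_eq_sum_card_fiberwise fun D hD => ?_, card_pathMatchings]
  · congr 1
    omega
  · exact mem_powersetCard.mpr ⟨subset_univ _, by rw [card_uncovered hD]; omega⟩

/-- For `m ≥ 1` and `0 ≤ k ≤ m`, the sum over all `2k`-element subsets
`α` of `{1,…,2m}` of the hafnians of the submatrices `U₁(α)` obtained from `U₁` by
deleting the rows and columns indexed by `α` equals `C(m+k, m−k)`. -/
theorem sum_hafnian_U₁_submatrix (m k : ℕ) (hm : 0 < m) (hk : k ≤ m) :
    ∑ α ∈ Finset.powersetCard (2 * k) (Finset.univ : Finset (Fin (2 * m))),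
      hafnian ((U₁ (2 * m)).submatrix
        (fun i : {x : Fin (2 * m) // x ∉ α} => (i : Fin (2 * m)))
        (fun i : {x : Fin (2 * m) // x ∉ α} => (i : Fin (2 * m)))) =
      Nat.choose (m + k) (m - k) :=
  sum_hafnian_U₁_submatrix_general m k hk
end
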